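/- arXiv:2304.09235 — 11 statements merged into one kernel-verified Lean document; each statement's English description precedes it below -/
import Mathlib

section
/- Let L ≥ 1 be an integer and let φ, φ̃ ∈ (0,1) and ψ, ψ̃ > 0 be real numbers with (φ,ψ) ≠ (φ̃,ψ̃). Then for every λ ∈ ℂ and every nonzero vector x ∈ ℂ^{2L} satisfying A_L(φ,ψ) x = (1−λ) A_L(φ̃,ψ̃) x, one has |λ|² < ((φ̃−φ)² + (ψ̃−ψ)²) / ((1−φ̃)² + ψ̃²). (This is the per-eigenvalue form of the tracking ParaOpt convergence bound ρ < ρ*.) -/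
open Matrix

/-- The L×L matrix with ones on the diagonal, −φ on the first subdiagonal, zeros elsewhere. -/
def lowerBidiag (L : ℕ) (φ : ℝ) : Matrix (Fin L) (Fin L) ℝ :=
  fun i j => if i = j then 1 else if (i : ℕ) = (j : ℕ) + 1 then -φ else 0

/-- The tracking ParaOpt block matrix A_L(φ,ψ) = [[B_L(φ), ψI],[−ψI, B_L(φ)ᵀ]]. -/
def trackingMat (L : ℕ) (φ ψ : ℝ) : Matrix (Fin L ⊕ Fin L) (Fin L ⊕ Fin L) ℝ :=
  Matrix.fromBlocks (lowerBidiag L φ) (ψ • (1 : Matrix (Fin L) (Fin L) ℝ))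
    (-(ψ • (1 : Matrix (Fin L) (Fin L) ℝ))) (lowerBidiag L φ)ᵀ

/-!
Write `A_L(φ, ψ) = 1 - (φ K + ψ J)` with `K = diag(N, Nᵀ)` for the lower shift `N` and `J` the
standard symplectic matrix. The eigen-equation becomes `λ Ã x = (φ - φ̃) K x + (ψ - ψ̃) J x`.
Because `J` is unitary and `J`, `Kᴴ J` are skew-Hermitian, `J x` is orthogonal (over `ℝ`) to `x`
and to `K x`; with `‖K x‖ ≤ ‖x‖` this bounds `‖λ Ã x‖²` by `((φ - φ̃)² + (ψ - ψ̃)²) ‖x‖²`.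
On the other hand `‖Ã x‖² - ((1 - φ̃)² + ψ̃²) ‖x‖² = φ̃ (‖x - K x‖² + (1 - φ̃) (‖x‖² - ‖K x‖²))`,
which is positive since `1 - K` is unipotent, hence injective.
-/

open RCLike WithLp

section InnerProductSpace

variable {𝕜 E : Type*} [RCLike 𝕜] [NormedAddCommGroup E] [InnerProductSpace 𝕜 E]

local notation "⟪" x ", " y "⟫" => @inner 𝕜 _ _ x y

theorem norm_ofReal_smul_add_ofReal_smul_sq {k j : E} (hkj : re ⟪k, j⟫ = 0) (c d : ℝ) :
    ‖(c : 𝕜) • k + (d : 𝕜) • j‖ ^ 2 = c ^ 2 * ‖k‖ ^ 2 + d ^ 2 * ‖j‖ ^ 2 := by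
  rw [@norm_add_sq 𝕜, inner_smul_left, inner_smul_right, norm_smul, norm_smul]
  simp [hkj, mul_pow]

theorem norm_sub_ofReal_smul_add_ofReal_smul_sq {x k j : E} (hxj : re ⟪x, j⟫ = 0)
    (hkj : re ⟪k, j⟫ = 0) (a b : ℝ) :
    ‖x - ((a : 𝕜) • k + (b : 𝕜) • j)‖ ^ 2
      = ‖x‖ ^ 2 - 2 * a * re ⟪x, k⟫ + a ^ 2 * ‖k‖ ^ 2 + b ^ 2 * ‖j‖ ^ 2 := by
  rw [@norm_sub_sq 𝕜, norm_ofReal_smul_add_ofReal_smul_sq hkj, inner_add_right,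
    inner_smul_right, inner_smul_right]
  simp [hxj]
  ring

theorem lt_norm_sub_ofReal_smul_add_ofReal_smul_sq {x k j : E} {a : ℝ} (ha₀ : 0 < a)
    (ha₁ : a < 1) (hj : ‖j‖ = ‖x‖) (hxj : re ⟪x, j⟫ = 0) (hkj : re ⟪k, j⟫ = 0)
    (hk : ‖k‖ ≤ ‖x‖) (hkx : k ≠ x) (b : ℝ) :
    ((1 - a) ^ 2 + b ^ 2) * ‖x‖ ^ 2 < ‖x - ((a : 𝕜) • k + (b : 𝕜) • j)‖ ^ 2 := by
  have ht : 0 < ‖x - k‖ ^ 2 := pow_pos (norm_pos_iff.2 (sub_ne_zero.2 hkx.symm)) 2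
  have hm : ‖k‖ ^ 2 ≤ ‖x‖ ^ 2 := by gcongr
  rw [@norm_sub_sq 𝕜] at ht
  rw [norm_sub_ofReal_smul_add_ofReal_smul_sq hxj hkj, hj]
  nlinarith [mul_pos ha₀ ht, mul_nonneg (mul_nonneg ha₀.le (sub_nonneg.2 ha₁.le)) (sub_nonneg.2 hm)]

theorem norm_sq_lt_of_sub_eq_smul_sub {x k j : E} {a : ℝ} (ha₀ : 0 < a) (ha₁ : a < 1)
    (hj : ‖j‖ = ‖x‖) (hxj : re ⟪x, j⟫ = 0) (hkj : re ⟪k, j⟫ = 0) (hk : ‖k‖ ≤ ‖x‖) (hkx : k ≠ x)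
    {b c d : ℝ} (hne : (c, d) ≠ (a, b)) {μ : 𝕜}
    (h : x - ((c : 𝕜) • k + (d : 𝕜) • j) = (1 - μ) • (x - ((a : 𝕜) • k + (b : 𝕜) • j))) :
    ‖μ‖ ^ 2 < ((a - c) ^ 2 + (b - d) ^ 2) / ((1 - a) ^ 2 + b ^ 2) := by
  have hμ : μ • (x - ((a : 𝕜) • k + (b : 𝕜) • j))
      = ((c - a : ℝ) : 𝕜) • k + ((d - b : ℝ) : 𝕜) • j := by
    push_cast
    linear_combination (norm := module) h
  set D := ‖x - ((a : 𝕜) • k + (b : 𝕜) • j)‖ ^ 2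
  set Q := (1 - a) ^ 2 + b ^ 2
  set s := (a - c) ^ 2 + (b - d) ^ 2
  have hμD : ‖μ‖ ^ 2 * D ≤ s * ‖x‖ ^ 2 := by
    rw [← mul_pow, ← norm_smul, hμ, norm_ofReal_smul_add_ofReal_smul_sq hkj, hj]
    nlinarith [pow_le_pow_left₀ (norm_nonneg k) hk 2, sq_nonneg (c - a)]
  have hs : 0 < s := by
    have : a - c ≠ 0 ∨ b - d ≠ 0 := by
      contrapose! hne
      simp [sub_eq_zero.1 hne.1, sub_eq_zero.1 hne.2]
    rcases this with hac | hbd <;> positivity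
  have hQ : 0 < Q := by nlinarith [sq_nonneg b, sub_pos.2 ha₁]
  have hQD : Q * ‖x‖ ^ 2 < D :=
    lt_norm_sub_ofReal_smul_add_ofReal_smul_sq ha₀ ha₁ hj hxj hkj hk hkx b
  rw [lt_div_iff₀ hQ]
  refine lt_of_mul_lt_mul_right ?_ ((mul_nonneg hQ.le (sq_nonneg ‖x‖)).trans_lt hQD).le
  calc ‖μ‖ ^ 2 * Q * D = Q * (‖μ‖ ^ 2 * D) := by ring
    _ ≤ Q * (s * ‖x‖ ^ 2) := by gcongr
    _ = s * (Q * ‖x‖ ^ 2) := by ring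
    _ < s * D := by gcongr

end InnerProductSpace

section MatrixInner

variable {𝕜 ι : Type*} [RCLike 𝕜] [Fintype ι]

local notation "⟪" x ", " y "⟫" => @inner 𝕜 _ _ x y

theorem inner_toLp_mulVec_toLp_mulVec (A B : Matrix ι ι 𝕜) (x : ι → 𝕜) :
    ⟪toLp 2 (A *ᵥ x), toLp 2 (B *ᵥ x)⟫ = ⟪toLp 2 x, toLp 2 ((Aᴴ * B) *ᵥ x)⟫ := by
  simp only [EuclideanSpace.inner_toLp_toLp, star_mulVec, ← mulVec_mulVec]
  rw [dotProduct_comm, ← dotProduct_mulVec, dotProduct_comm]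

theorem re_inner_toLp_mulVec_eq_zero [DecidableEq ι] {M : Matrix ι ι 𝕜} (hM : Mᴴ = -M)
    (x : ι → 𝕜) :
    re ⟪toLp 2 x, toLp 2 (M *ᵥ x)⟫ = 0 := by
  have h := inner_toLp_mulVec_toLp_mulVec M 1 x
  rw [one_mulVec, mul_one, hM, neg_mulVec, toLp_neg, inner_neg_right] at h
  have := congrArg re h
  rw [map_neg, inner_re_symm] at this
  linarith

theorem norm_toLp_mulVec [DecidableEq ι] {U : Matrix ι ι 𝕜} (hU : Uᴴ * U = 1) (x : ι → 𝕜) :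
    ‖toLp 2 (U *ᵥ x)‖ = ‖toLp 2 x‖ := by
  rw [norm_eq_sqrt_re_inner (𝕜 := 𝕜), norm_eq_sqrt_re_inner (𝕜 := 𝕜),
    inner_toLp_mulVec_toLp_mulVec, hU, one_mulVec]

theorem re_inner_toLp_mulVec_toLp_mulVec_eq_zero [DecidableEq ι] {A B : Matrix ι ι 𝕜}
    (hB : Bᴴ = -B) (hAB : B * A = Aᴴ * B) (x : ι → 𝕜) :
    re ⟪toLp 2 (A *ᵥ x), toLp 2 (B *ᵥ x)⟫ = 0 := by
  rw [inner_toLp_mulVec_toLp_mulVec]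
  refine re_inner_toLp_mulVec_eq_zero ?_ x
  rw [conjTranspose_mul, conjTranspose_conjTranspose, hB, Matrix.neg_mul, hAB]

end MatrixInner

namespace Matrix

section J

variable {l R : Type*} [DecidableEq l] [CommRing R] [StarRing R]

theorem conjTranspose_J : (J l R)ᴴ = -J l R := by
  simp [J, fromBlocks_conjTranspose, fromBlocks_neg]

theorem conjTranspose_J_mul_J [Fintype l] : (J l R)ᴴ * J l R = 1 := by
  rw [conjTranspose_J, Matrix.neg_mul, J_squared, neg_neg]

end J

variable (R : Type*) (L : ℕ)

def lowerShift [Zero R] [One R] : Matrix (Fin L) (Fin L) R :=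
  of fun i j => if (i : ℕ) = j + 1 then 1 else 0

def blockShift [Zero R] [One R] : Matrix (Fin L ⊕ Fin L) (Fin L ⊕ Fin L) R :=
  fromBlocks (lowerShift R L) 0 0 (lowerShift R L)ᵀ

variable {R L}

theorem map_star_lowerShift [Semiring R] [StarRing R] :
    (lowerShift R L).map star = lowerShift R L := by
  ext i j
  simp only [lowerShift, map_apply, of_apply]
  split_ifs <;> simp

theorem conjTranspose_lowerShift [Semiring R] [StarRing R] :
    (lowerShift R L)ᴴ = (lowerShift R L)ᵀ := by
  rw [conjTranspose, transpose_map, map_star_lowerShift]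

theorem J_mul_blockShift [CommRing R] [StarRing R] :
    J (Fin L) R * blockShift R L = (blockShift R L)ᴴ * J (Fin L) R := by
  simp [J, blockShift, fromBlocks_multiply, fromBlocks_conjTranspose, conjTranspose_lowerShift,
    transpose_conjTranspose, map_star_lowerShift]

theorem det_one_sub_lowerShift [CommRing R] : (1 - lowerShift R L).det = 1 := by
  rw [det_of_isLowerTriangular]
  · simp [lowerShift]
  · intro i j (hij : i < j)
    have : (i : ℕ) ≠ j + 1 := by have := Fin.lt_def.1 hij; omega
    simp [lowerShift, hij.ne, this]

theorem blockShift_mulVec_ne_self [CommRing R] [IsDomain R] {x : Fin L ⊕ Fin L → R}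
    (hx : x ≠ 0) :
    blockShift R L *ᵥ x ≠ x := by
  intro h
  have hdet : (1 - blockShift R L).det = 1 := by
    have : 1 - blockShift R L = fromBlocks (1 - lowerShift R L) 0 0 (1 - lowerShift R L)ᵀ := by
      rw [blockShift, ← fromBlocks_one, transpose_sub, transpose_one]
      ext (i | i) (j | j) <;> simp [one_apply]
    rw [this, det_fromBlocks_zero₂₁, det_transpose, det_one_sub_lowerShift, one_mul]
  refine hx (eq_zero_of_mulVec_eq_zero (M := 1 - blockShift R L) (by simp [hdet]) ?_)
  rw [sub_mulVec, one_mulVec, h, sub_self]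

theorem lowerShift_mulVec_zero [NonAssocSemiring R] {n : ℕ} (u : Fin (n + 1) → R) :
    (lowerShift R (n + 1) *ᵥ u) 0 = 0 := by
  simp [lowerShift, mulVec, dotProduct]

theorem lowerShift_mulVec_succ [NonAssocSemiring R] {n : ℕ} (u : Fin (n + 1) → R) (i : Fin n) :
    (lowerShift R (n + 1) *ᵥ u) i.succ = u i.castSucc := by
  simp only [lowerShift, mulVec, dotProduct, of_apply, ite_mul, one_mul, zero_mul]
  rw [Fintype.sum_eq_single i.castSucc fun j hj => if_neg fun h => hj (Fin.ext (by simp_all))]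
  simp

theorem lowerShift_transpose_mulVec_castSucc [NonAssocSemiring R] {n : ℕ} (u : Fin (n + 1) → R)
    (i : Fin n) : ((lowerShift R (n + 1))ᵀ *ᵥ u) i.castSucc = u i.succ := by
  simp only [lowerShift, mulVec, dotProduct, transpose_apply, of_apply, ite_mul, one_mul, zero_mul]
  rw [Fintype.sum_eq_single i.succ fun j hj => if_neg fun h => hj (Fin.ext (by simp_all))]
  simp

theorem lowerShift_transpose_mulVec_last [NonAssocSemiring R] {n : ℕ} (u : Fin (n + 1) → R) :
    ((lowerShift R (n + 1))ᵀ *ᵥ u) (Fin.last n) = 0 := by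
  simp [lowerShift, mulVec, dotProduct, (Fin.is_lt _).ne]

theorem sum_norm_sq_lowerShift_mulVec_le [SeminormedRing R] (u : Fin L → R) :
    ∑ i, ‖(lowerShift R L *ᵥ u) i‖ ^ 2 ≤ ∑ i, ‖u i‖ ^ 2 := by
  cases L with
  | zero => simp
  | succ n =>
    rw [Fin.sum_univ_succ, Fin.sum_univ_castSucc (f := fun i => ‖u i‖ ^ 2)]
    simp only [lowerShift_mulVec_zero, lowerShift_mulVec_succ, norm_zero, zero_pow two_ne_zero,
      zero_add]
    exact le_add_of_nonneg_right (sq_nonneg _)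

theorem sum_norm_sq_lowerShift_transpose_mulVec_le [SeminormedRing R] (u : Fin L → R) :
    ∑ i, ‖((lowerShift R L)ᵀ *ᵥ u) i‖ ^ 2 ≤ ∑ i, ‖u i‖ ^ 2 := by
  cases L with
  | zero => simp
  | succ n =>
    rw [Fin.sum_univ_castSucc, Fin.sum_univ_succ (f := fun i => ‖u i‖ ^ 2)]
    simp only [lowerShift_transpose_mulVec_castSucc, lowerShift_transpose_mulVec_last, norm_zero,
      zero_pow two_ne_zero, add_zero]
    exact le_add_of_nonneg_left (sq_nonneg _)

theorem norm_toLp_blockShift_mulVec_le {𝕜 : Type*} [RCLike 𝕜] (x : Fin L ⊕ Fin L → 𝕜) :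
    ‖toLp 2 (blockShift 𝕜 L *ᵥ x)‖ ≤ ‖toLp 2 x‖ := by
  rw [← sq_le_sq₀ (norm_nonneg _) (norm_nonneg _), EuclideanSpace.norm_sq_eq,
    EuclideanSpace.norm_sq_eq]
  simp only [blockShift, fromBlocks_mulVec, Fintype.sum_sum_type, Sum.elim_inl, Sum.elim_inr,
    zero_mulVec, add_zero, zero_add]
  exact add_le_add (sum_norm_sq_lowerShift_mulVec_le _)
    (sum_norm_sq_lowerShift_transpose_mulVec_le _)

end Matrix

theorem trackingMat_map_ofReal (L : ℕ) (φ ψ : ℝ) :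
    (trackingMat L φ ψ).map ((↑) : ℝ → ℂ)
      = 1 - ((φ : ℂ) • blockShift ℂ L + (ψ : ℂ) • J (Fin L) ℂ) := by
  ext (i | i) (j | j) <;>
    simp [trackingMat, blockShift, lowerBidiag, lowerShift, J, one_apply] <;> split_ifs <;> simp_all

theorem tracking_paraopt_eigenvalue_bound_general
    (L : ℕ) (φ ψ φt ψt : ℝ)
    (hφt0 : 0 < φt) (hφt1 : φt < 1)
    (hne : (φ, ψ) ≠ (φt, ψt))
    (lam : ℂ) (x : (Fin L ⊕ Fin L) → ℂ) (hx : x ≠ 0)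
    (heq : ((trackingMat L φ ψ).map Complex.ofReal).mulVec x =
      (1 - lam) • ((trackingMat L φt ψt).map Complex.ofReal).mulVec x) :
    ‖lam‖ ^ 2 < ((φt - φ) ^ 2 + (ψt - ψ) ^ 2) / ((1 - φt) ^ 2 + ψt ^ 2) := by
  have hJ : (J (Fin L) ℂ)ᴴ = -J (Fin L) ℂ := conjTranspose_J
  refine norm_sq_lt_of_sub_eq_smul_sub (𝕜 := ℂ) hφt0 hφt1
    (norm_toLp_mulVec conjTranspose_J_mul_J x) (re_inner_toLp_mulVec_eq_zero hJ x)
    (re_inner_toLp_mulVec_toLp_mulVec_eq_zero hJ J_mul_blockShift x)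
    (norm_toLp_blockShift_mulVec_le x) ((toLp_injective 2).ne (blockShift_mulVec_ne_self hx))
    hne ?_
  simpa [trackingMat_map_ofReal, sub_mulVec, add_mulVec, smul_mulVec] using
    congrArg (toLp 2) heq

theorem tracking_paraopt_eigenvalue_bound
    (L : ℕ) (hL : 1 ≤ L) (φ ψ φt ψt : ℝ)
    (hφ0 : 0 < φ) (hφ1 : φ < 1) (hφt0 : 0 < φt) (hφt1 : φt < 1)
    (hψ : 0 < ψ) (hψt : 0 < ψt) (hne : (φ, ψ) ≠ (φt, ψt))
    (lam : ℂ) (x : (Fin L ⊕ Fin L) → ℂ) (hx : x ≠ 0)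
    (heq : ((trackingMat L φ ψ).map Complex.ofReal).mulVec x =
      (1 - lam) • ((trackingMat L φt ψt).map Complex.ofReal).mulVec x) :
    ‖lam‖ ^ 2 < ((φt - φ) ^ 2 + (ψt - ψ) ^ 2) / ((1 - φt) ^ 2 + ψt ^ 2) :=
  tracking_paraopt_eigenvalue_bound_general L φ ψ φt ψt hφt0 hφt1 hne lam x hx heq
end

section
/- Let L ≥ 1, let B, B̃ ∈ ℝ^{L×L}, and let ψ, ψ̃ ∈ ℝ with ψ̃ ≠ 0. Suppose θ ∈ ℂ and (v; w) ∈ ℂ^{2L} is a nonzero vector with [[B, ψI],[−ψI, Bᵀ]] (v; w) = θ [[B̃, ψ̃I],[−ψ̃I, B̃ᵀ]] (v; w), and suppose ψ − θψ̃ ≠ 0. Then v ≠ 0 and |1 − θ|² = (v*((B−B̃)ᵀ(B−B̃) + (ψ−ψ̃)² I)v) / (v*(B̃ᵀB̃ + ψ̃² I)v), where the denominator is strictly positive. -/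
/-!
Put `M = B - θ B̃` and `c = ψ - θ ψ̃`. The eigen-equation says `M v = -c w` and `Mᵀ w = c v`, hence
`(Mᵀ M + c²) v = 0`. With the real stacked matrices `S = [B; ψ I]`, `S̃ = [B̃; ψ̃ I]` and
`X = S v`, `Y = S̃ v` this reads `(X̄ - θ Ȳ) ⬝ (X - θ Y) = 0`, so `θ` is a root of the quadratic
`|X|² - 2 Re ⟨X, Y⟩ z + |Y|² z²` with real coefficients. At real `z` its value is `|X - z Y|²`, and
`X - θ Y ≠ 0` since its lower block is `c v`; so `θ` is not real, `θ` and `θ̄` are the two roots,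
and Vieta's formulas give `|1 - θ|² |Y|² = |X - Y|²`, which is the claimed identity.
-/

open Matrix

/-- The tracking block matrix [[B, ψI],[−ψI, Bᵀ]]. -/
def trackingBlock (L : ℕ) (B : Matrix (Fin L) (Fin L) ℝ) (ψ : ℝ) :
    Matrix (Fin L ⊕ Fin L) (Fin L ⊕ Fin L) ℝ :=
  Matrix.fromBlocks B (ψ • (1 : Matrix (Fin L) (Fin L) ℝ))
    (-(ψ • (1 : Matrix (Fin L) (Fin L) ℝ))) Bᵀ

open ComplexConjugate

section RealMatrices

variable {m n : Type*} [Fintype n]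

lemma star_map_ofReal_mulVec (A : Matrix m n ℝ) (x : n → ℂ) :
    star (A.map Complex.ofReal *ᵥ x) = A.map Complex.ofReal *ᵥ star x := by
  funext i
  simp [mulVec, dotProduct, mul_comm]

lemma star_map_ofReal_mulVec_dotProduct [Fintype m] (A : Matrix m n ℝ) (x : n → ℂ) :
    star (A.map Complex.ofReal *ᵥ x) ⬝ᵥ (A.map Complex.ofReal *ᵥ x) =
      star x ⬝ᵥ ((Aᵀ * A).map Complex.ofReal *ᵥ x) := by
  rw [star_map_ofReal_mulVec, ← vecMul_transpose, ← dotProduct_mulVec, mulVec_mulVec,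
    ← transpose_map]
  exact congrArg (fun N ↦ star x ⬝ᵥ N *ᵥ x) (Matrix.map_mul (f := Complex.ofRealHom)).symm

lemma transpose_fromRows_smul_one_mul_self [DecidableEq n] (A : Matrix n n ℝ) (s : ℝ) :
    (fromRows A (s • 1 : Matrix n n ℝ))ᵀ * fromRows A (s • 1 : Matrix n n ℝ) =
      Aᵀ * A + s ^ 2 • (1 : Matrix n n ℝ) := by
  rw [transpose_fromRows, fromCols_mul_fromRows, transpose_smul, transpose_one, smul_mul_smul,
    Matrix.one_mul, sq]

lemma star_fromRows_smul_one_map_ofReal_mulVec_dotProduct [DecidableEq n] (A : Matrix n n ℝ)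
    (s : ℝ) (x : n → ℂ) :
    star ((fromRows A (s • 1 : Matrix n n ℝ)).map Complex.ofReal *ᵥ x) ⬝ᵥ
        ((fromRows A (s • 1 : Matrix n n ℝ)).map Complex.ofReal *ᵥ x) =
      star x ⬝ᵥ ((Aᵀ * A + s ^ 2 • (1 : Matrix n n ℝ)).map Complex.ofReal *ᵥ x) := by
  rw [star_map_ofReal_mulVec_dotProduct, transpose_fromRows_smul_one_mul_self]

lemma fromRows_smul_one_map_ofReal_mulVec_sub_smul [DecidableEq n] (B Bt : Matrix n n ℝ)
    (ψ ψt : ℝ) (θ : ℂ) (x : n → ℂ) :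
    (fromRows B (ψ • 1 : Matrix n n ℝ)).map Complex.ofReal *ᵥ x
        - θ • (fromRows Bt (ψt • 1 : Matrix n n ℝ)).map Complex.ofReal *ᵥ x =
      fromRows (B.map Complex.ofReal - θ • Bt.map Complex.ofReal)
        (((ψ : ℂ) - θ * ψt) • 1) *ᵥ x := by
  rw [← smul_mulVec, ← sub_mulVec]
  congr 1
  ext (i | i) j <;> simp [one_apply]; split_ifs <;> simp

lemma fromRows_smul_one_map_ofReal_mulVec_sub [DecidableEq n] (B Bt : Matrix n n ℝ)
    (ψ ψt : ℝ) (x : n → ℂ) :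
    (fromRows B (ψ • 1 : Matrix n n ℝ)).map Complex.ofReal *ᵥ x
        - (fromRows Bt (ψt • 1 : Matrix n n ℝ)).map Complex.ofReal *ᵥ x =
      (fromRows (B - Bt) ((ψ - ψt) • 1 : Matrix n n ℝ)).map Complex.ofReal *ᵥ x := by
  rw [← sub_mulVec, ← Matrix.map_sub _ Complex.ofReal_sub]
  congr 2
  ext (i | i) j <;> simp [sub_smul]

end RealMatrices

section Pencil

variable {n R : Type*} [Fintype n] [DecidableEq n] [CommRing R]
  {M : Matrix n n R} {c : R} {v w : n → R}

lemma mulVec_eq_of_fromBlocks_mulVec_eq_zero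
    (h : fromBlocks M (c • 1) (-(c • 1)) Mᵀ *ᵥ Sum.elim v w = 0) :
    M *ᵥ v = -(c • w) ∧ Mᵀ *ᵥ w = c • v := by
  rw [fromBlocks_mulVec] at h
  constructor <;> funext i
  · simpa [smul_mulVec, add_eq_zero_iff_eq_neg] using congrFun h (Sum.inl i)
  · have := congrFun h (Sum.inr i)
    simp only [Sum.elim_inr, Pi.add_apply, Pi.zero_apply, neg_mulVec, smul_mulVec, one_mulVec,
      Sum.elim_comp_inl, Sum.elim_comp_inr, Pi.neg_apply, Pi.smul_apply, smul_eq_mul] at this ⊢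
    linear_combination this

lemma left_ne_zero_of_fromBlocks_mulVec_eq_zero [NoZeroDivisors R]
    (h : fromBlocks M (c • 1) (-(c • 1)) Mᵀ *ᵥ Sum.elim v w = 0) (hc : c ≠ 0)
    (hvw : Sum.elim v w ≠ 0) : v ≠ 0 := by
  rintro rfl
  have hw : c • w = 0 := by
    simpa using (mulVec_eq_of_fromBlocks_mulVec_eq_zero h).1.symm
  rw [(smul_eq_zero_iff_right hc).mp hw, Sum.elim_zero_zero] at hvw
  exact hvw rfl

lemma fromRows_mulVec_dotProduct_fromRows_mulVec_eq_zero
    (h : fromBlocks M (c • 1) (-(c • 1)) Mᵀ *ᵥ Sum.elim v w = 0) (x : n → R) :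
    (fromRows M (c • 1 : Matrix n n R) *ᵥ x) ⬝ᵥ (fromRows M (c • 1 : Matrix n n R) *ᵥ v) = 0 := by
  -- eliminating `w` gives `(Mᵀ * M + c ^ 2 • 1) *ᵥ v = 0`
  obtain ⟨hv, hw⟩ := mulVec_eq_of_fromBlocks_mulVec_eq_zero h
  have hMx : (M *ᵥ x) ⬝ᵥ w = c * (x ⬝ᵥ v) := by
    rw [← vecMul_transpose, ← dotProduct_mulVec, hw, dotProduct_smul, smul_eq_mul]
  rw [fromRows_mulVec, fromRows_mulVec, sumElim_dotProduct_sumElim, hv, dotProduct_neg,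
    dotProduct_smul, hMx]
  simp only [smul_mulVec, one_mulVec, smul_dotProduct, dotProduct_smul, smul_eq_mul]
  ring

end Pencil

section Isotropic

open scoped ComplexOrder

variable {ι : Type*} [Fintype ι] {X Y : ι → ℂ} {θ : ℂ}

lemma ne_conj_of_star_sub_smul_dotProduct_eq_zero
    (h : (star X - θ • star Y) ⬝ᵥ (X - θ • Y) = 0) (hne : X - θ • Y ≠ 0) : θ ≠ conj θ := by
  intro hθ
  refine hne (dotProduct_star_self_eq_zero.mp ?_)
  rwa [star_sub, star_smul, Complex.star_def, ← hθ]

lemma sq_norm_one_sub_mul_star_dotProduct_self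
    (h : (star X - θ • star Y) ⬝ᵥ (X - θ • Y) = 0) (hne : X - θ • Y ≠ 0) :
    (‖1 - θ‖ ^ 2 : ℂ) * (star Y ⬝ᵥ Y) = star (X - Y) ⬝ᵥ (X - Y) := by
  set a := star X ⬝ᵥ X
  set b := star X ⬝ᵥ Y + star Y ⬝ᵥ X
  set d := star Y ⬝ᵥ Y
  have hroot : a - θ * b + θ ^ 2 * d = 0 := by
    rw [← h]
    simp only [sub_dotProduct, dotProduct_sub, smul_dotProduct, dotProduct_smul, smul_eq_mul,
      a, b, d]
    ring
  have hconj : a - conj θ * b + conj θ ^ 2 * d = 0 := by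
    have ha : conj a = a := (star_dotProduct X X).symm
    have hb : conj b = b := by
      rw [← Complex.star_def, star_add, ← star_dotProduct, ← star_dotProduct, add_comm]
    have hd : conj d = d := (star_dotProduct Y Y).symm
    simpa [ha, hb, hd] using congrArg conj hroot
  -- `θ` and `conj θ` are the two roots of `a - z b + z² d`, so Vieta's formulas apply
  have hsum : b = (θ + conj θ) * d :=
    mul_left_cancel₀ (sub_ne_zero.mpr (ne_conj_of_star_sub_smul_dotProduct_eq_zero h hne))
      (by linear_combination hconj - hroot)
  have hdiff : star (X - Y) ⬝ᵥ (X - Y) = a - b + d := by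
    simp only [star_sub, sub_dotProduct, dotProduct_sub, a, b, d]
    ring
  rw [hdiff, ← Complex.mul_conj', map_sub, map_one]
  linear_combination (1 - θ) * hsum - hroot

lemma ne_zero_of_star_sub_smul_dotProduct_eq_zero
    (h : (star X - θ • star Y) ⬝ᵥ (X - θ • Y) = 0) (hne : X - θ • Y ≠ 0) : Y ≠ 0 := by
  rintro rfl
  simp only [star_zero, smul_zero, sub_zero] at h hne
  exact hne (dotProduct_star_self_eq_zero.mp h)

lemma exists_pos_ofReal_eq_star_dotProduct_self (hY : Y ≠ 0) :
    ∃ d : ℝ, 0 < d ∧ (d : ℂ) = star Y ⬝ᵥ Y := by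
  have hpos : 0 < star Y ⬝ᵥ Y := dotProduct_star_self_pos_iff.mpr hY
  refine ⟨_, (Complex.pos_iff.mp hpos).1, ?_⟩
  exact (Complex.eq_re_of_ofReal_le (r := 0) (by exact_mod_cast hpos.le)).symm

end Isotropic

lemma trackingBlock_map_ofReal_mulVec_sub_smul (L : ℕ) (B Bt : Matrix (Fin L) (Fin L) ℝ)
    (ψ ψt : ℝ) (θ : ℂ) (x : Fin L ⊕ Fin L → ℂ) :
    (trackingBlock L B ψ).map Complex.ofReal *ᵥ x
        - θ • (trackingBlock L Bt ψt).map Complex.ofReal *ᵥ x =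
      fromBlocks (B.map Complex.ofReal - θ • Bt.map Complex.ofReal) (((ψ : ℂ) - θ * ψt) • 1)
        (-(((ψ : ℂ) - θ * ψt) • 1)) (B.map Complex.ofReal - θ • Bt.map Complex.ofReal)ᵀ *ᵥ x := by
  rw [← smul_mulVec, ← sub_mulVec]
  congr 1
  ext (i | i) (j | j) <;> simp [trackingBlock, one_apply] <;> split_ifs <;> simp; ring

theorem tracking_generalized_eigenvalue_identity_general
    (L : ℕ) (B Bt : Matrix (Fin L) (Fin L) ℝ) (ψ ψt : ℝ)
    (θ : ℂ) (v w : Fin L → ℂ) (hvw : Sum.elim v w ≠ 0)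
    (heig : ((trackingBlock L B ψ).map Complex.ofReal).mulVec (Sum.elim v w) =
      θ • ((trackingBlock L Bt ψt).map Complex.ofReal).mulVec (Sum.elim v w))
    (hdenom : (ψ : ℂ) - θ * (ψt : ℂ) ≠ 0) :
    v ≠ 0 ∧
    ∃ d : ℝ, 0 < d ∧
      (d : ℂ) = star v ⬝ᵥ ((Btᵀ * Bt + ψt ^ 2 • (1 : Matrix (Fin L) (Fin L) ℝ)).map
          Complex.ofReal).mulVec v ∧
      (‖1 - θ‖ ^ 2 : ℂ) =
        (star v ⬝ᵥ (((B - Bt)ᵀ * (B - Bt) + (ψ - ψt) ^ 2 • (1 : Matrix (Fin L) (Fin L) ℝ)).map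
          Complex.ofReal).mulVec v) / (d : ℂ) := by
  have hpencil := trackingBlock_map_ofReal_mulVec_sub_smul L B Bt ψ ψt θ (Sum.elim v w)
  rw [heig, sub_self, eq_comm] at hpencil
  have hv := left_ne_zero_of_fromBlocks_mulVec_eq_zero hpencil hdenom hvw
  set X := (fromRows B (ψ • 1 : Matrix (Fin L) (Fin L) ℝ)).map Complex.ofReal *ᵥ v
  set Y := (fromRows Bt (ψt • 1 : Matrix (Fin L) (Fin L) ℝ)).map Complex.ofReal *ᵥ v
  have hiso : (star X - θ • star Y) ⬝ᵥ (X - θ • Y) = 0 := by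
    rw [star_map_ofReal_mulVec, star_map_ofReal_mulVec,
      fromRows_smul_one_map_ofReal_mulVec_sub_smul, fromRows_smul_one_map_ofReal_mulVec_sub_smul]
    exact fromRows_mulVec_dotProduct_fromRows_mulVec_eq_zero hpencil _
  have hne : X - θ • Y ≠ 0 := by
    rw [fromRows_smul_one_map_ofReal_mulVec_sub_smul, fromRows_mulVec, smul_mulVec, one_mulVec]
    exact fun h ↦ smul_ne_zero hdenom hv (congrArg (· ∘ Sum.inr) h)
  obtain ⟨d, hd, hdY⟩ := exists_pos_ofReal_eq_star_dotProduct_self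
    (ne_zero_of_star_sub_smul_dotProduct_eq_zero hiso hne)
  refine ⟨hv, d, hd, hdY.trans (star_fromRows_smul_one_map_ofReal_mulVec_dotProduct _ _ _), ?_⟩
  rw [← star_fromRows_smul_one_map_ofReal_mulVec_dotProduct,
    ← fromRows_smul_one_map_ofReal_mulVec_sub,
    ← sq_norm_one_sub_mul_star_dotProduct_self hiso hne, ← hdY,
    mul_div_cancel_right₀ _ (Complex.ofReal_ne_zero.mpr hd.ne')]

theorem tracking_generalized_eigenvalue_identity
    (L : ℕ) (hL : 1 ≤ L) (B Bt : Matrix (Fin L) (Fin L) ℝ) (ψ ψt : ℝ) (hψt : ψt ≠ 0)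
    (θ : ℂ) (v w : Fin L → ℂ) (hvw : Sum.elim v w ≠ 0)
    (heig : ((trackingBlock L B ψ).map Complex.ofReal).mulVec (Sum.elim v w) =
      θ • ((trackingBlock L Bt ψt).map Complex.ofReal).mulVec (Sum.elim v w))
    (hdenom : (ψ : ℂ) - θ * (ψt : ℂ) ≠ 0) :
    v ≠ 0 ∧
    ∃ d : ℝ, 0 < d ∧
      (d : ℂ) = star v ⬝ᵥ ((Btᵀ * Bt + ψt ^ 2 • (1 : Matrix (Fin L) (Fin L) ℝ)).map
          Complex.ofReal).mulVec v ∧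
      (‖1 - θ‖ ^ 2 : ℂ) =
        (star v ⬝ᵥ (((B - Bt)ᵀ * (B - Bt) + (ψ - ψt) ^ 2 • (1 : Matrix (Fin L) (Fin L) ℝ)).map
          Complex.ofReal).mulVec v) / (d : ℂ) :=
  tracking_generalized_eigenvalue_identity_general L B Bt ψ ψt θ v w hvw heig hdenom
end

section
/- Let L ≥ 1 and let φ̃ ∈ (0,1). Let M₂ be the L×L real symmetric tridiagonal matrix whose diagonal entries are 1+φ̃² except for the last diagonal entry, which is 1, and whose sub- and superdiagonal entries are all −φ̃. Then every eigenvalue ξ of M₂ satisfies ξ > (1−φ̃)². -/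
open Matrix

/-- The L×L symmetric tridiagonal matrix with diagonal 1+φ² (except 1 in the last entry)
and −φ on the sub- and superdiagonals. -/
def M2mat (L : ℕ) (φ : ℝ) : Matrix (Fin L) (Fin L) ℝ :=
  fun i j =>
    if i = j then (if (i : ℕ) = L - 1 then 1 else 1 + φ ^ 2)
    else if (i : ℕ) = (j : ℕ) + 1 ∨ (j : ℕ) = (i : ℕ) + 1 then -φ
    else 0

set_option maxHeartbeats 1600000 in
theorem M2_eigenvalue_lower_bound
    (L : ℕ) (hL : 1 ≤ L) (φ : ℝ) (hφ0 : 0 < φ) (hφ1 : φ < 1)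
    (ξ : ℝ) (v : Fin L → ℝ) (hv : v ≠ 0)
    (heig : (M2mat L φ).mulVec v = ξ • v) :
    ξ > (1 - φ) ^ 2 := by
  classical
  obtain ⟨n, rfl⟩ : ∃ n, L = n + 1 := ⟨L - 1, (Nat.succ_pred_eq_of_pos hL).symm⟩
  set w : ℕ → ℝ := fun k => if h : k < n + 1 then v ⟨k, h⟩ else 0 with hwdef
  have hwv : ∀ i : Fin (n + 1), w (i : ℕ) = v i := by
    intro i
    simp only [hwdef]; exact dif_pos i.isLt
  have hw0 : ∀ k, n + 1 ≤ k → w k = 0 := by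
    intro k hk
    simp only [hwdef]; exact dif_neg (by omega)
  set d : ℕ → ℝ := fun k => if k = n then 1 else 1 + φ ^ 2 with hddef
  set m : ℕ → ℕ → ℝ := fun k l =>
    if k = l then d k else if k = l + 1 ∨ l = k + 1 then -φ else 0 with hmdef
  have hM : ∀ i j : Fin (n + 1), M2mat (n + 1) φ i j = m (i : ℕ) (j : ℕ) := by
    intro i j
    simp [M2mat, hmdef, hddef, Fin.ext_iff]
  set T : ℝ := ∑ k ∈ Finset.range (n + 1), w k ^ 2 with hTdef
  set P : ℝ := ∑ k ∈ Finset.range (n + 1), w k * w (k + 1) with hPdef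
  set R : ℝ := w 0 ^ 2 + (∑ k ∈ Finset.range n, (w (k + 1) - w k) ^ 2)
      + (1 - φ) * w n ^ 2 with hRdef
  have hT' : ∑ i : Fin (n + 1), v i * v i = T := by
    rw [hTdef, ← Fin.sum_univ_eq_sum_range (fun k => w k ^ 2)]
    exact Finset.sum_congr rfl fun i _ => by rw [hwv]; ring
  have heigsum : ∑ i ∈ Finset.range (n + 1), ∑ j ∈ Finset.range (n + 1),
      w i * m i j * w j = ξ * T := by
    have h1 : ∀ i : Fin (n + 1), (M2mat (n + 1) φ).mulVec v i = ξ * v i := by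
      intro i; rw [heig]; simp
    have h2 : ∑ i : Fin (n + 1), v i * ((M2mat (n + 1) φ).mulVec v i) = ξ * T := by
      rw [← hT', Finset.mul_sum]
      exact Finset.sum_congr rfl fun i _ => by rw [h1]; ring
    rw [← h2,
      ← Fin.sum_univ_eq_sum_range (fun i => ∑ j ∈ Finset.range (n + 1), w i * m i j * w j)]
    refine Finset.sum_congr rfl fun i _ => ?_
    rw [← Fin.sum_univ_eq_sum_range (fun j => w (i : ℕ) * m (i : ℕ) j * w j)]
    simp only [Matrix.mulVec, dotProduct, Finset.mul_sum]
    exact Finset.sum_congr rfl fun j _ => by rw [hM, hwv, hwv]; ring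
  have hdecomp : ∀ k l : ℕ, m k l =
      (if k = l then d k else 0) + (if k = l + 1 then -φ else 0)
        + (if l = k + 1 then -φ else 0) := by
    intro k l
    simp only [hmdef]
    split_ifs <;> first | (exfalso; omega) | ring1
  have hS1 : ∑ i ∈ Finset.range (n + 1), ∑ j ∈ Finset.range (n + 1),
      w i * (if i = j then d i else 0) * w j
      = (1 + φ ^ 2) * T - φ ^ 2 * w n ^ 2 := by
    have h1 : ∀ i ∈ Finset.range (n + 1), ∑ j ∈ Finset.range (n + 1),
        w i * (if i = j then d i else 0) * w j = d i * w i ^ 2 := by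
      intro i hi
      rw [Finset.sum_congr rfl (fun j _ => show w i * (if i = j then d i else 0) * w j
            = (if i = j then w i * d i * w j else 0) from by split_ifs <;> ring)]
      rw [Finset.sum_ite_eq (Finset.range (n + 1)) i (fun j => w i * d i * w j), if_pos hi]
      ring
    rw [Finset.sum_congr rfl h1]
    have h2 : ∀ i ∈ Finset.range (n + 1), d i * w i ^ 2
        = (1 + φ ^ 2) * w i ^ 2 - (if i = n then φ ^ 2 * w i ^ 2 else 0) := by
      intro i _
      simp only [hddef]
      split_ifs <;> ring
    rw [Finset.sum_congr rfl h2, Finset.sum_sub_distrib, ← Finset.mul_sum,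
      Finset.sum_ite_eq' (Finset.range (n + 1)) n (fun i => φ ^ 2 * w i ^ 2),
      if_pos (Finset.self_mem_range_succ n), hTdef]
  have hS2 : ∑ i ∈ Finset.range (n + 1), ∑ j ∈ Finset.range (n + 1),
      w i * (if i = j + 1 then -φ else 0) * w j = -φ * P := by
    rw [Finset.sum_comm]
    have hinner : ∀ j ∈ Finset.range (n + 1), ∑ i ∈ Finset.range (n + 1),
        w i * (if i = j + 1 then -φ else 0) * w j = -φ * (w j * w (j + 1)) := by
      intro j _
      rw [Finset.sum_congr rfl (fun i _ => show w i * (if i = j + 1 then -φ else 0) * w j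
            = (if i = j + 1 then w i * (-φ) * w j else 0) from by split_ifs <;> ring)]
      rw [Finset.sum_ite_eq' (Finset.range (n + 1)) (j + 1) (fun i => w i * (-φ) * w j)]
      split_ifs with h
      · ring
      · have hz : w (j + 1) = 0 := by
          apply hw0
          by_contra hc
          exact h (Finset.mem_range.mpr (by omega))
        rw [hz]; ring
    rw [Finset.sum_congr rfl hinner, ← Finset.mul_sum, hPdef]
  have hS3 : ∑ i ∈ Finset.range (n + 1), ∑ j ∈ Finset.range (n + 1),
      w i * (if j = i + 1 then -φ else 0) * w j = -φ * P := by
    have hinner : ∀ i ∈ Finset.range (n + 1), ∑ j ∈ Finset.range (n + 1),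
        w i * (if j = i + 1 then -φ else 0) * w j = -φ * (w i * w (i + 1)) := by
      intro i _
      rw [Finset.sum_congr rfl (fun j _ => show w i * (if j = i + 1 then -φ else 0) * w j
            = (if j = i + 1 then w i * (-φ) * w j else 0) from by split_ifs <;> ring)]
      rw [Finset.sum_ite_eq' (Finset.range (n + 1)) (i + 1) (fun j => w i * (-φ) * w j)]
      split_ifs with h
      · ring
      · have hz : w (i + 1) = 0 := by
          apply hw0
          by_contra hc
          exact h (Finset.mem_range.mpr (by omega))
        rw [hz]; ring
    rw [Finset.sum_congr rfl hinner, ← Finset.mul_sum, hPdef]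
  have hid : ∑ i ∈ Finset.range (n + 1), ∑ j ∈ Finset.range (n + 1), w i * m i j * w j
      = (1 + φ ^ 2) * T - φ ^ 2 * w n ^ 2 - 2 * φ * P := by
    have hpt : ∀ i j : ℕ, w i * m i j * w j
        = w i * (if i = j then d i else 0) * w j
          + w i * (if i = j + 1 then -φ else 0) * w j
          + w i * (if j = i + 1 then -φ else 0) * w j := by
      intro i j; rw [hdecomp]; ring
    simp only [hpt, Finset.sum_add_distrib]
    rw [hS1, hS2, hS3]
    ring
  have hA : ∑ k ∈ Finset.range n, w (k + 1) ^ 2 = T - w 0 ^ 2 := by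
    rw [hTdef, Finset.sum_range_succ' (fun k => w k ^ 2) n]
    ring
  have hB : ∑ k ∈ Finset.range n, w k ^ 2 = T - w n ^ 2 := by
    rw [hTdef, Finset.sum_range_succ]
    ring
  have hC : ∑ k ∈ Finset.range n, w k * w (k + 1) = P := by
    rw [hPdef, Finset.sum_range_succ, hw0 (n + 1) le_rfl]
    ring
  have hexp : ∑ k ∈ Finset.range n, (w (k + 1) - w k) ^ 2
      = (T - w 0 ^ 2) + (T - w n ^ 2) - 2 * P := by
    rw [Finset.sum_congr rfl (fun k _ => show (w (k + 1) - w k) ^ 2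
        = w (k + 1) ^ 2 + w k ^ 2 - 2 * (w k * w (k + 1)) from by ring)]
    rw [Finset.sum_sub_distrib, Finset.sum_add_distrib, ← Finset.mul_sum, hA, hB, hC]
  have hmain : ξ * T = (1 - φ) ^ 2 * T + φ * R := by
    rw [← heigsum, hid, hRdef, hexp]
    ring
  have hvne : ∃ i : Fin (n + 1), v i ≠ 0 := by
    by_contra h
    push_neg at h
    exact hv (funext h)
  obtain ⟨i0, hi0⟩ := hvne
  have hTpos : 0 < T := by
    rw [hTdef]
    refine Finset.sum_pos' (fun k _ => sq_nonneg _)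
      ⟨(i0 : ℕ), Finset.mem_range.mpr i0.isLt, ?_⟩
    rw [hwv]
    exact lt_of_le_of_ne (sq_nonneg _) (Ne.symm (pow_ne_zero 2 hi0))
  have hsnn : 0 ≤ ∑ k ∈ Finset.range n, (w (k + 1) - w k) ^ 2 :=
    Finset.sum_nonneg fun k _ => sq_nonneg _
  have hlnn : 0 ≤ (1 - φ) * w n ^ 2 := mul_nonneg (by linarith) (sq_nonneg _)
  have hRnn : 0 ≤ R := by
    rw [hRdef]
    have := sq_nonneg (w 0)
    linarith
  have hRpos : 0 < R := by
    rcases lt_or_eq_of_le hRnn with h | h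
    · exact h
    exfalso
    have hR0 : w 0 ^ 2 + (∑ k ∈ Finset.range n, (w (k + 1) - w k) ^ 2)
        + (1 - φ) * w n ^ 2 = 0 := by rw [← hRdef]; exact h.symm
    have hw00 : w 0 = 0 := by
      have h02 : w 0 ^ 2 = 0 := by nlinarith [sq_nonneg (w 0)]
      exact pow_eq_zero_iff two_ne_zero |>.mp h02
    have hs : ∑ k ∈ Finset.range n, (w (k + 1) - w k) ^ 2 = 0 := by
      have := sq_nonneg (w 0)
      linarith
    have hstep : ∀ k < n, w (k + 1) = w k := by
      intro k hk
      have hterm := (Finset.sum_eq_zero_iff_of_nonneg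
        (fun k _ => sq_nonneg (w (k + 1) - w k))).mp hs k (Finset.mem_range.mpr hk)
      have h2 : w (k + 1) - w k = 0 := pow_eq_zero_iff two_ne_zero |>.mp hterm
      linarith
    have hall : ∀ k, k ≤ n → w k = 0 := by
      intro k
      induction k with
      | zero => intro _; exact hw00
      | succ k ih =>
        intro hk
        rw [hstep k (by omega), ih (by omega)]
    apply hv
    funext i
    rw [← hwv i]
    exact hall i (Nat.lt_succ_iff.mp i.isLt)
  have hfin : (ξ - (1 - φ) ^ 2) * T = φ * R := by linear_combination hmain
  have hpos : 0 < (ξ - (1 - φ) ^ 2) * T := hfin ▸ mul_pos hφ0 hRpos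
  nlinarith [hpos, hTpos]
end

section
/- Let L ≥ 1, let B, B̃ ∈ ℝ^{L×L} with B̃ invertible, and let ψ, ψ̃ > 0 be real. Let E = e_L e_Lᵀ be the L×L matrix whose only nonzero entry is a 1 in position (L,L). Suppose θ ∈ ℂ has nonzero imaginary part and (v; w) ∈ ℂ^{2L} is a nonzero vector with [[B, ψI],[−E, Bᵀ]] (v; w) = θ [[B̃, ψ̃I],[−E, B̃ᵀ]] (v; w). Then v ≠ 0, the real number v*(B̃ᵀB̃ + ψ̃E)v is strictly positive, and |1 − θ|² = (v*(B−B̃)ᵀ(B−B̃)v) / (v*(B̃ᵀB̃ + ψ̃E)v). -/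
/-!
Write `C, C̃, E` for the complexifications of `B, B̃, cornerMat L`, `s = 1 - θ`, `u = (C - C̃) v`
and `a = C̃ v`. The first block row of the eigen-equation says `u + s a = (θ ψ̃ - ψ) w`; pairing
the second block row with `v` and substituting `w` turns it into the quadratic equation
`P + s² D + s R = 0`, where `P = ‖u‖²`, `D = ‖a‖² + ψ̃ v*Ev` and `R` are real. Conjugating it
gives the same equation for `s̄ ≠ s`, and eliminating `R` leaves `P = |s|² D`. The denominator
`D` is positive because `C̃ᴴC̃ + ψ̃ E` is positive definite.
-/

open Matrix

/-- The L×L matrix whose only nonzero entry is a 1 in the bottom-right corner. -/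
def cornerMat (L : ℕ) : Matrix (Fin L) (Fin L) ℝ :=
  fun i j => if (i : ℕ) = L - 1 ∧ (j : ℕ) = L - 1 then 1 else 0

/-- The terminal-cost block matrix [[B, ψI],[−E, Bᵀ]]. -/
def terminalBlock (L : ℕ) (B : Matrix (Fin L) (Fin L) ℝ) (ψ : ℝ) :
    Matrix (Fin L ⊕ Fin L) (Fin L ⊕ Fin L) ℝ :=
  Matrix.fromBlocks B (ψ • (1 : Matrix (Fin L) (Fin L) ℝ)) (-(cornerMat L)) Bᵀ

open ComplexConjugate
open scoped ComplexOrder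

theorem Complex.eq_norm_sq_mul_of_add_sq_mul_add_mul_eq_zero {P Q R s : ℂ}
    (hP : conj P = P) (hQ : conj Q = Q) (hR : conj R = R) (hs : conj s ≠ s)
    (h : P + s ^ 2 * Q + s * R = 0) : P = ‖s‖ ^ 2 * Q := by
  have h' : P + conj s ^ 2 * Q + conj s * R = 0 := by
    simpa [hP, hQ, hR] using congrArg conj h
  have hR' : (s + conj s) * Q + R = 0 := by
    refine (mul_eq_zero.1 ?_).resolve_left (sub_ne_zero.2 hs.symm)
    linear_combination h - h'
  rw [← Complex.mul_conj']
  linear_combination h - s * hR'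

theorem Matrix.star_dotProduct_conjTranspose_mulVec {α m n : Type*} [Fintype m] [Fintype n]
    [CommSemiring α] [StarRing α] (M : Matrix m n α) (x : n → α) (y : m → α) :
    star x ⬝ᵥ (Mᴴ *ᵥ y) = star (M *ᵥ x) ⬝ᵥ y := by
  rw [dotProduct_mulVec, star_mulVec]

theorem Matrix.conjTranspose_map_ofReal {m n : Type*} (A : Matrix m n ℝ) :
    (A.map Complex.ofReal)ᴴ = Aᵀ.map Complex.ofReal := by
  ext; simp

theorem Matrix.map_ofReal_transpose_mul_self {m n : Type*} [Fintype m] (A : Matrix m n ℝ) :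
    (Aᵀ * A).map Complex.ofReal = (A.map Complex.ofReal)ᴴ * A.map Complex.ofReal := by
  ext; simp [mul_apply]

theorem add_sq_mul_add_mul_eq_zero_of_block_eigen {n : Type*} [Fintype n] {C Ct E : Matrix n n ℂ}
    {ψ ψt θ : ℂ} {v w : n → ℂ}
    (h1 : C *ᵥ v + ψ • w = θ • (Ct *ᵥ v + ψt • w))
    (h2 : -E *ᵥ v + Cᴴ *ᵥ w = θ • (-E *ᵥ v + Ctᴴ *ᵥ w)) :
    star v ⬝ᵥ (((C - Ct)ᴴ * (C - Ct)) *ᵥ v) + (1 - θ) ^ 2 * star v ⬝ᵥ ((Ctᴴ * Ct + ψt • E) *ᵥ v)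
      + (1 - θ) * (star ((C - Ct) *ᵥ v) ⬝ᵥ (Ct *ᵥ v) + star (Ct *ᵥ v) ⬝ᵥ ((C - Ct) *ᵥ v)
        - (ψt - ψ) * star v ⬝ᵥ (E *ᵥ v)) = 0 := by
  have hC : C = (C - Ct) + Ct := (sub_add_cancel C Ct).symm
  set u := (C - Ct) *ᵥ v
  set a := Ct *ᵥ v
  have hw : u + (1 - θ) • a = (θ * ψt - ψ) • w := by
    rw [hC, add_mulVec] at h1
    linear_combination (norm := module) h1
  have hvw : star (u + a) ⬝ᵥ w - θ * (star a ⬝ᵥ w) = (1 - θ) * (star v ⬝ᵥ (E *ᵥ v)) := by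
    have := congrArg (star v ⬝ᵥ ·) h2
    simp only [dotProduct_add, dotProduct_smul, neg_mulVec, dotProduct_neg, smul_eq_mul,
      star_dotProduct_conjTranspose_mulVec] at this
    rw [hC, add_mulVec] at this
    linear_combination this
  have key : star (u + a) ⬝ᵥ (u + (1 - θ) • a) - θ * (star a ⬝ᵥ (u + (1 - θ) • a)) =
      (θ * ψt - ψ) * ((1 - θ) * (star v ⬝ᵥ (E *ᵥ v))) := by
    rw [hw, dotProduct_smul, dotProduct_smul, smul_eq_mul, smul_eq_mul]
    linear_combination (θ * ψt - ψ) * hvw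
  rw [← mulVec_mulVec, star_dotProduct_conjTranspose_mulVec, add_mulVec, ← mulVec_mulVec,
    dotProduct_add, star_dotProduct_conjTranspose_mulVec, smul_mulVec, dotProduct_smul,
    smul_eq_mul]
  simp only [star_add, add_dotProduct, dotProduct_add, dotProduct_smul, smul_eq_mul] at key
  linear_combination key

theorem ne_zero_of_block_eigen {n : Type*} [Fintype n] {C Ct : Matrix n n ℂ} {ψ ψt : ℝ}
    {θ : ℂ} {v w : n → ℂ} (hψt : ψt ≠ 0) (hθ : θ.im ≠ 0) (hvw : Sum.elim v w ≠ 0)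
    (h1 : C *ᵥ v + (ψ : ℂ) • w = θ • (Ct *ᵥ v + (ψt : ℂ) • w)) : v ≠ 0 := by
  rintro rfl
  have hc : (θ * ψt - ψ : ℂ) ≠ 0 := fun h => hθ (by simpa [hψt] using congrArg Complex.im h)
  have hw : (θ * ψt - ψ : ℂ) • w = 0 := by
    simp only [mulVec_zero, zero_add, smul_smul] at h1
    linear_combination (norm := module) -h1
  exact hvw (by simp [(smul_eq_zero.1 hw).resolve_left hc])

theorem cornerMat_transpose_mul_self (L : ℕ) : (cornerMat L)ᵀ * cornerMat L = cornerMat L := by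
  ext i j
  obtain ⟨k, hk⟩ : ∃ k : Fin L, ∀ x : Fin L, (x : ℕ) = L - 1 ↔ x = k :=
    ⟨⟨L - 1, by have := i.isLt; omega⟩, fun x => by rw [Fin.ext_iff]⟩
  by_cases hi : i = k <;> by_cases hj : j = k <;> simp [cornerMat, mul_apply, hk, hi, hj]

theorem posSemidef_cornerMat_map_ofReal (L : ℕ) :
    ((cornerMat L).map Complex.ofReal).PosSemidef := by
  rw [← cornerMat_transpose_mul_self, map_ofReal_transpose_mul_self]
  exact posSemidef_conjTranspose_mul_self _

theorem Matrix.map_ofReal_transpose_mul_self_add_smul {m n : Type*} [Fintype m]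
    (A : Matrix m n ℝ) (r : ℝ) (M : Matrix n n ℝ) :
    (Aᵀ * A + r • M).map Complex.ofReal =
      (A.map Complex.ofReal)ᴴ * A.map Complex.ofReal + (r : ℂ) • M.map Complex.ofReal := by
  rw [← map_ofReal_transpose_mul_self]; ext; simp

theorem posDef_transpose_mul_self_add_smul_cornerMat_map_ofReal {L : ℕ}
    {Bt : Matrix (Fin L) (Fin L) ℝ} (hBt : IsUnit Bt) {ψt : ℝ} (hψt : 0 ≤ ψt) :
    ((Btᵀ * Bt + ψt • cornerMat L).map Complex.ofReal).PosDef := by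
  rw [map_ofReal_transpose_mul_self_add_smul]
  refine (PosDef.conjTranspose_mul_self _ ?_).add_posSemidef
    ((posSemidef_cornerMat_map_ofReal L).smul (Complex.zero_le_real.2 hψt))
  exact mulVec_injective_iff_isUnit.2 (hBt.map Complex.ofRealHom.mapMatrix)

theorem terminalBlock_map_ofReal (L : ℕ) (B : Matrix (Fin L) (Fin L) ℝ) (ψ : ℝ) :
    (terminalBlock L B ψ).map Complex.ofReal =
      fromBlocks (B.map Complex.ofReal) ((ψ : ℂ) • 1) (-(cornerMat L).map Complex.ofReal)
        (B.map Complex.ofReal)ᴴ := by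
  rw [terminalBlock, fromBlocks_map, conjTranspose_map_ofReal]
  congr 1
  · ext i j; simp [one_apply, apply_ite Complex.ofReal]
  · ext i j; simp

theorem terminalBlock_map_ofReal_mulVec_eq_smul_iff {L : ℕ} {B Bt : Matrix (Fin L) (Fin L) ℝ} {ψ ψt : ℝ} {θ : ℂ}
    {v w : Fin L → ℂ} :
    ((terminalBlock L B ψ).map Complex.ofReal) *ᵥ Sum.elim v w =
        θ • ((terminalBlock L Bt ψt).map Complex.ofReal) *ᵥ Sum.elim v w ↔
      B.map Complex.ofReal *ᵥ v + (ψ : ℂ) • w = θ • (Bt.map Complex.ofReal *ᵥ v + (ψt : ℂ) • w) ∧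
      -(cornerMat L).map Complex.ofReal *ᵥ v + (B.map Complex.ofReal)ᴴ *ᵥ w =
        θ • (-(cornerMat L).map Complex.ofReal *ᵥ v + (Bt.map Complex.ofReal)ᴴ *ᵥ w) := by
  have hsmul (a b : Fin L → ℂ) : θ • Sum.elim a b = Sum.elim (θ • a) (θ • b) := by
    ext (i | i) <;> rfl
  simp only [terminalBlock_map_ofReal, fromBlocks_mulVec, hsmul, Sum.elim_eq_iff,
    Sum.elim_comp_inl, Sum.elim_comp_inr, smul_mulVec, one_mulVec]

theorem terminal_cost_nonreal_eigenvalue_identity_general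
    (L : ℕ) (B Bt : Matrix (Fin L) (Fin L) ℝ) (hBt : IsUnit Bt)
    (ψ ψt : ℝ) (hψt : 0 < ψt)
    (θ : ℂ) (hθ : θ.im ≠ 0) (v w : Fin L → ℂ) (hvw : Sum.elim v w ≠ 0)
    (heig : ((terminalBlock L B ψ).map Complex.ofReal).mulVec (Sum.elim v w) =
      θ • ((terminalBlock L Bt ψt).map Complex.ofReal).mulVec (Sum.elim v w)) :
    v ≠ 0 ∧
    ∃ d : ℝ, 0 < d ∧
      (d : ℂ) = star v ⬝ᵥ ((Btᵀ * Bt + ψt • cornerMat L).map Complex.ofReal).mulVec v ∧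
      (‖1 - θ‖ ^ 2 : ℂ) =
        (star v ⬝ᵥ (((B - Bt)ᵀ * (B - Bt)).map Complex.ofReal).mulVec v) / (d : ℂ) := by
  obtain ⟨h1, h2⟩ := terminalBlock_map_ofReal_mulVec_eq_smul_iff.1 heig
  have hv : v ≠ 0 := ne_zero_of_block_eigen hψt.ne' hθ hvw h1
  obtain ⟨d, hd, hdD : (d : ℂ) = _⟩ := RCLike.pos_iff_exists_ofReal.1 <|
    (posDef_transpose_mul_self_add_smul_cornerMat_map_ofReal hBt hψt.le).dotProduct_mulVec_pos hv
  refine ⟨hv, d, hd, hdD, ?_⟩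
  rw [map_ofReal_transpose_mul_self_add_smul] at hdD
  rw [eq_div_iff (by exact_mod_cast hd.ne'), hdD, map_ofReal_transpose_mul_self,
    Matrix.map_sub _ Complex.ofReal_sub]
  have hP := ((posSemidef_conjTranspose_mul_self
    (B.map Complex.ofReal - Bt.map Complex.ofReal)).dotProduct_mulVec_nonneg v).star_eq
  have he := ((posSemidef_cornerMat_map_ofReal L).dotProduct_mulVec_nonneg v).star_eq
  refine (Complex.eq_norm_sq_mul_of_add_sq_mul_add_mul_eq_zero hP ?_ ?_ ?_
    (add_sq_mul_add_mul_eq_zero_of_block_eigen h1 h2)).symm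
  · rw [← hdD, Complex.conj_ofReal]
  · simp only [map_add, map_sub, map_mul, Complex.conj_ofReal]
    simp only [starRingEnd_apply, he, ← Matrix.star_dotProduct]
    ring
  · rw [Ne, Complex.conj_eq_iff_im]
    simpa using hθ

theorem terminal_cost_nonreal_eigenvalue_identity
    (L : ℕ) (hL : 1 ≤ L) (B Bt : Matrix (Fin L) (Fin L) ℝ) (hBt : IsUnit Bt)
    (ψ ψt : ℝ) (hψ : 0 < ψ) (hψt : 0 < ψt)
    (θ : ℂ) (hθ : θ.im ≠ 0) (v w : Fin L → ℂ) (hvw : Sum.elim v w ≠ 0)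
    (heig : ((terminalBlock L B ψ).map Complex.ofReal).mulVec (Sum.elim v w) =
      θ • ((terminalBlock L Bt ψt).map Complex.ofReal).mulVec (Sum.elim v w)) :
    v ≠ 0 ∧
    ∃ d : ℝ, 0 < d ∧
      (d : ℂ) = star v ⬝ᵥ ((Btᵀ * Bt + ψt • cornerMat L).map Complex.ofReal).mulVec v ∧
      (‖1 - θ‖ ^ 2 : ℂ) =
        (star v ⬝ᵥ (((B - Bt)ᵀ * (B - Bt)).map Complex.ofReal).mulVec v) / (d : ℂ) :=
  terminal_cost_nonreal_eigenvalue_identity_general L B Bt hBt ψ ψt hψt θ hθ v w hvw heig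
end

section
/- Let L ≥ 1 be an integer and let φ, φ̃ ∈ (0,1) and ψ, ψ̃ > 0 be real numbers. Then for every λ ∈ ℂ with nonzero imaginary part and every nonzero vector x ∈ ℂ^{2L} satisfying A_L^T(φ,ψ) x = (1−λ) A_L^T(φ̃,ψ̃) x, one has |λ| ≤ |φ−φ̃| / (1−φ̃). -/
/-!
With `s = φ - (1-λ)φ̃`, `c = ψ - (1-λ)ψ̃` and `N` the down-shift (so `B_L(φ) = 1 - φN`), the
pencil `A - (1-λ)Ã` is `[[λ - sN, c], [-λE, λ - sNᵀ]]`. Its block rows are first-order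
recurrences along the time slices, so for `λ ≠ 0` and `r = s/λ` a nonzero null vector exists
only if `λ = -c G(r)`, where `G(r) = ∑_{j<L} r^{2j}`.

If `|λ| > |φ - φ̃|/(1 - φ̃)`, then `r = φ̃ + (φ - φ̃)/λ` lies in the disc `|r - φ̃| < 1 - φ̃`,
inside the unit disc. There `Im r · Im((r - φ̃) G(r)) ≥ 0`: for `Im r > 0` this combines
`Im(r G) ≥ 0` and `Im((1 - r)² G) ≤ 0`, both obtained by clearing the denominator of
`G = (1 - q^L)/(1 - q)`, `q = r²`, and using `(1 - |q|) |Im q^L| ≤ |Im q| (1 - Re q^L)`.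
But `λ = -c G(r)` makes `(1 + ψ̃ G(r)) / ((r - φ̃) G(r))` real, and its imaginary part has the
opposite sign. When `φ = φ̃`, `G` is real and `λ` is forced to be real.
-/

open Matrix

/-- The terminal-cost ParaOpt block matrix A_L^T(φ,ψ) = [[B_L(φ), ψI],[−E, B_L(φ)ᵀ]]. -/
def terminalMat (L : ℕ) (φ ψ : ℝ) : Matrix (Fin L ⊕ Fin L) (Fin L ⊕ Fin L) ℝ :=
  Matrix.fromBlocks (lowerBidiag L φ) (ψ • (1 : Matrix (Fin L) (Fin L) ℝ))
    (-(cornerMat L)) (lowerBidiag L φ)ᵀ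

open Finset Complex ComplexConjugate

theorem succ_mul_one_sub_mul_pow_le {t : ℝ} (ht0 : 0 ≤ t) (ht1 : t ≤ 1) (m : ℕ) :
    (m + 1) * (1 - t) * t ^ m ≤ 1 - t ^ (m + 1) := by
  have hsum : (m + 1) * t ^ m ≤ ∑ i ∈ range (m + 1), t ^ i := by
    have := card_nsmul_le_sum (range (m + 1)) (t ^ ·) (t ^ m) fun i hi =>
      pow_le_pow_of_le_one ht0 ht1 (Nat.lt_succ_iff.mp (mem_range.mp hi))
    simpa using this
  rw [← mul_neg_geom_sum]
  nlinarith

namespace Complex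

theorem abs_im_pow_succ_le (q : ℂ) (m : ℕ) :
    |(q ^ (m + 1)).im| ≤ (m + 1) * |q.im| * ‖q‖ ^ m := by
  induction m with
  | zero => simp
  | succ m ih =>
    have hre : |(q ^ (m + 1)).re| ≤ ‖q‖ ^ (m + 1) :=
      (abs_re_le_norm _).trans (norm_pow q _).le
    calc |(q ^ (m + 2)).im| = |q.re * (q ^ (m + 1)).im + q.im * (q ^ (m + 1)).re| := by
          rw [pow_succ', mul_im]
      _ ≤ ‖q‖ * ((m + 1) * |q.im| * ‖q‖ ^ m) + |q.im| * ‖q‖ ^ (m + 1) := by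
          refine (abs_add_le _ _).trans ?_
          rw [abs_mul, abs_mul]
          gcongr
          exact abs_re_le_norm q
      _ = (↑(m + 1) + 1) * |q.im| * ‖q‖ ^ (m + 1) := by push_cast; ring

theorem one_sub_norm_mul_abs_im_pow_le {q : ℂ} (hq : ‖q‖ ≤ 1) (n : ℕ) :
    (1 - ‖q‖) * |(q ^ n).im| ≤ |q.im| * (1 - (q ^ n).re) := by
  cases n with
  | zero => simp
  | succ m =>
    calc (1 - ‖q‖) * |(q ^ (m + 1)).im| ≤ (1 - ‖q‖) * ((m + 1) * |q.im| * ‖q‖ ^ m) :=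
          mul_le_mul_of_nonneg_left (abs_im_pow_succ_le q m) (by linarith)
      _ = |q.im| * ((m + 1) * (1 - ‖q‖) * ‖q‖ ^ m) := by ring
      _ ≤ |q.im| * (1 - ‖q‖ ^ (m + 1)) := by
          gcongr; exact succ_mul_one_sub_mul_pow_le (norm_nonneg q) hq m
      _ ≤ |q.im| * (1 - (q ^ (m + 1)).re) := by
          gcongr; exact (re_le_norm _).trans (norm_pow q _).le

variable {r : ℂ}

theorem one_sub_normSq_mul_abs_im_sq_pow_le (hr : ‖r‖ ≤ 1) (n : ℕ) :
    (1 - normSq r) * |((r ^ 2) ^ n).im| ≤ 2 * |r.re| * |r.im| * (1 - ((r ^ 2) ^ n).re) := by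
  have hq : ‖r ^ 2‖ ≤ 1 := by rw [norm_pow]; exact pow_le_one₀ (norm_nonneg r) hr
  have him : (r ^ 2).im = 2 * r.re * r.im := by rw [sq, mul_im]; ring
  have h := one_sub_norm_mul_abs_im_pow_le hq n
  rwa [norm_pow, Complex.sq_norm, him, abs_mul, abs_mul, abs_two] at h

theorem normSq_le_one (hr : ‖r‖ ≤ 1) : normSq r ≤ 1 := by
  rw [← Complex.sq_norm]; exact pow_le_one₀ (norm_nonneg r) hr

theorem re_sq_pow_le_one (hr : ‖r‖ ≤ 1) (n : ℕ) : ((r ^ 2) ^ n).re ≤ 1 :=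
  (re_le_norm _).trans <| by
    rw [norm_pow, norm_pow]; exact pow_le_one₀ (by positivity) (pow_le_one₀ (norm_nonneg r) hr)

theorem im_mul_geom_sum_sq_nonneg (hr : ‖r‖ ≤ 1) (him : 0 < r.im) (n : ℕ) :
    0 ≤ (r * ∑ j ∈ range n, (r ^ 2) ^ j).im := by
  set w := (r ^ 2) ^ n
  have hid : (normSq (1 - r ^ 2) : ℂ) * (r * ∑ j ∈ range n, (r ^ 2) ^ j)
      = (1 - conj r * conj r) * r * (1 - w) := by
    rw [← mul_conj, map_sub, map_one, map_pow]
    linear_combination (1 - conj r ^ 2) * r * mul_neg_geom_sum (r ^ 2) n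
  have hpos : 0 < normSq (1 - r ^ 2) := by
    refine normSq_pos.mpr fun h => him.ne' ?_
    have : (1 - r) * (1 + r) = 0 := by linear_combination h
    rcases mul_eq_zero.mp this with h | h
    · simpa using congrArg im h
    · simpa using congrArg im h
  have hkey : normSq (1 - r ^ 2) * (r * ∑ j ∈ range n, (r ^ 2) ^ j).im
      = r.im * (1 + normSq r) * (1 - w.re) - r.re * (1 - normSq r) * w.im := by
    rw [← im_ofReal_mul, hid]
    simp only [mul_im, mul_re, sub_re, sub_im, one_re, one_im, conj_re, conj_im, normSq_apply]
    ring
  have hW := one_sub_normSq_mul_abs_im_sq_pow_le hr n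
  rw [abs_of_pos him] at hW
  have hρ := normSq_le_one hr
  have h1w : 0 ≤ 1 - w.re := sub_nonneg.mpr (re_sq_pow_le_one hr n)
  refine nonneg_of_mul_nonneg_right ?_ hpos
  rw [hkey, sub_nonneg]
  have hre : |r.re| ^ 2 ≤ normSq r := by rw [sq_abs, normSq_apply]; nlinarith
  calc r.re * (1 - normSq r) * w.im ≤ |r.re| * ((1 - normSq r) * |w.im|) := by
        have h := mul_le_mul_of_nonneg_left (le_abs_self (r.re * w.im)) (sub_nonneg.mpr hρ)
        rw [abs_mul] at h
        linarith
    _ ≤ |r.re| * (2 * |r.re| * r.im * (1 - w.re)) := by gcongr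
    _ = 2 * |r.re| ^ 2 * (r.im * (1 - w.re)) := by ring
    _ ≤ (1 + normSq r) * (r.im * (1 - w.re)) := by gcongr; linarith
    _ = r.im * (1 + normSq r) * (1 - w.re) := by ring

theorem im_one_sub_sq_mul_geom_sum_sq_nonpos (hr : ‖r‖ ≤ 1) (him : 0 < r.im) (n : ℕ) :
    ((1 - r) ^ 2 * ∑ j ∈ range n, (r ^ 2) ^ j).im ≤ 0 := by
  set w := (r ^ 2) ^ n
  have hid : (normSq (1 + r) : ℂ) * ((1 - r) ^ 2 * ∑ j ∈ range n, (r ^ 2) ^ j)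
      = (1 + conj r) * (1 - r) * (1 - w) := by
    rw [← mul_conj, map_add, map_one]
    linear_combination (1 + conj r) * (1 - r) * mul_neg_geom_sum (r ^ 2) n
  have hpos : 0 < normSq (1 + r) := normSq_pos.mpr fun h => him.ne' (by simpa using congrArg im h)
  have hkey : normSq (1 + r) * ((1 - r) ^ 2 * ∑ j ∈ range n, (r ^ 2) ^ j).im
      = -(1 - normSq r) * w.im - 2 * r.im * (1 - w.re) := by
    rw [← im_ofReal_mul, hid]
    simp only [mul_im, mul_re, sub_re, sub_im, add_re, add_im, one_re, one_im, conj_re, conj_im,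
      normSq_apply]
    ring
  have hW := one_sub_normSq_mul_abs_im_sq_pow_le hr n
  rw [abs_of_pos him] at hW
  have hρ := normSq_le_one hr
  have h1w : 0 ≤ 1 - w.re := sub_nonneg.mpr (re_sq_pow_le_one hr n)
  have hre : |r.re| ≤ 1 := (abs_re_le_norm r).trans hr
  refine nonpos_of_mul_nonpos_right ?_ hpos
  rw [hkey]
  calc -(1 - normSq r) * w.im - 2 * r.im * (1 - w.re)
        ≤ (1 - normSq r) * |w.im| - 2 * r.im * (1 - w.re) := by
          have := mul_le_mul_of_nonneg_left (neg_le_abs w.im) (sub_nonneg.mpr hρ)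
          linarith
    _ ≤ 2 * |r.re| * r.im * (1 - w.re) - 2 * r.im * (1 - w.re) := by gcongr
    _ = 2 * r.im * (1 - w.re) * (|r.re| - 1) := by ring
    _ ≤ 0 := mul_nonpos_of_nonneg_of_nonpos (by positivity) (by linarith)

theorem im_sub_mul_geom_sum_sq_nonneg {φ : ℝ} (hφ : 0 ≤ φ) (hr : ‖r - φ‖ < 1 - φ)
    (him : 0 < r.im) (n : ℕ) : 0 ≤ ((r - φ) * ∑ j ∈ range n, (r ^ 2) ^ j).im := by
  set G := ∑ j ∈ range n, (r ^ 2) ^ j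
  have hr1 : ‖r‖ ≤ 1 := by
    have := norm_sub_norm_le r φ
    rw [norm_real, Real.norm_of_nonneg hφ] at this
    linarith
  have hdisk : 2 * φ * (1 - r.re) < 1 - normSq r := by
    have h : normSq (r - φ) < (1 - φ) ^ 2 := by
      rw [← Complex.sq_norm]; exact pow_lt_pow_left₀ hr (norm_nonneg _) two_ne_zero
    rw [normSq_apply] at h ⊢
    simp only [sub_re, sub_im, ofReal_re, ofReal_im, sub_zero] at h
    nlinarith
  have hre : r.re < 1 := by
    have := (re_le_norm (r - φ)).trans_lt hr
    simp only [sub_re, ofReal_re] at this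
    linarith
  have hA := im_mul_geom_sum_sq_nonneg hr1 him n
  have hB := im_one_sub_sq_mul_geom_sum_sq_nonpos hr1 him n
  have hBid : ((1 - r) ^ 2 * G).im = (1 - normSq r) * G.im - 2 * (1 - r.re) * (r * G).im := by
    simp only [mul_im, mul_re, sq, sub_re, sub_im, one_re, one_im, normSq_apply]; ring
  have hP : ((r - φ) * G).im = (r * G).im - φ * G.im := by
    simp only [sub_mul, sub_im, im_ofReal_mul]
  rw [hBid] at hB
  rw [hP]
  rcases le_or_gt G.im 0 with hG | hG
  · nlinarith
  -- `2 (1 - Re r) Im((r - φ) G) = -Im((1 - r)² G) + (1 - |r|² - 2φ (1 - Re r)) Im G`,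
  -- and the disc makes the last bracket positive.
  · nlinarith [mul_pos hG (sub_pos.mpr hdisk), sub_pos.mpr hre]

theorem im_mul_im_sub_mul_geom_sum_sq_nonneg {φ : ℝ} (hφ : 0 ≤ φ)
    (hr : ‖r - φ‖ < 1 - φ) (n : ℕ) :
    0 ≤ r.im * ((r - φ) * ∑ j ∈ range n, (r ^ 2) ^ j).im := by
  rcases lt_trichotomy r.im 0 with him | him | him
  · have hconj : (conj r - φ) * ∑ j ∈ range n, (conj r ^ 2) ^ j
        = conj ((r - φ) * ∑ j ∈ range n, (r ^ 2) ^ j) := by simp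
    have h := im_sub_mul_geom_sum_sq_nonneg hφ (r := conj r)
      (by rwa [← conj_ofReal, ← map_sub, norm_conj]) (by simpa using him) n
    rw [hconj, conj_im] at h
    nlinarith
  · simp [him]
  · exact mul_nonneg him.le (im_sub_mul_geom_sum_sq_nonneg hφ hr him n)

theorem one_add_mul_geom_sum_sq_ne {φ ψ : ℝ} (hφ : 0 ≤ φ) (hr : ‖r - φ‖ < 1 - φ)
    (him : r.im ≠ 0) (hψ : 0 < ψ) (n : ℕ) (t : ℝ) :
    1 + ψ * ∑ j ∈ range n, (r ^ 2) ^ j ≠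
      t * ((r - φ) * ∑ j ∈ range n, (r ^ 2) ^ j) := by
  have hP := im_mul_im_sub_mul_geom_sum_sq_nonneg hφ hr n
  set G := ∑ j ∈ range n, (r ^ 2) ^ j
  intro h
  have hreal : ((1 + ψ * G) * conj ((r - φ) * G)).im = 0 := by
    rw [h, mul_assoc, mul_conj, ← ofReal_mul, ofReal_im]
  have hexp : (1 + ψ * G) * conj ((r - φ) * G)
      = conj ((r - φ) * G) + (ψ * normSq G : ℝ) * conj (r - φ) := by
    rw [ofReal_mul, ← mul_conj, map_mul]; ring
  rw [hexp, add_im, im_ofReal_mul, conj_im, conj_im, sub_im, ofReal_im, sub_zero] at hreal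
  have hG : normSq G ≤ 0 := by
    have : 0 ≤ -(ψ * normSq G * r.im ^ 2) := by linear_combination hP - r.im * hreal
    nlinarith [mul_pos hψ (sq_pos_of_ne_zero him)]
  rw [normSq_eq_zero.mp (le_antisymm hG (normSq_nonneg G))] at h
  simp at h

end Complex

section Recurrence

variable {R : Type*} {n : ℕ} {y z : Fin (n + 1) → R} {r a : R}

theorem eq_zero_of_castSucc_eq_mul_succ [MulZeroClass R]
    (hz : ∀ k : Fin n, z k.castSucc = r * z k.succ) (hlast : z (Fin.last n) = 0) : z = 0 :=
  funext fun i => Fin.reverseInduction (motive := fun i => z i = 0) hlast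
    (fun k ih => by rw [hz, ih, mul_zero]) i

theorem eq_mul_geom_sum_of_recurrence [CommRing R]
    (hz : ∀ k : Fin n, z k.castSucc = r * z k.succ) (hy0 : y 0 = a * z 0)
    (hy : ∀ k : Fin n, y k.succ = r * y k.castSucc + a * z k.succ) (i : Fin (n + 1)) :
    y i = a * z i * ∑ j ∈ range (i + 1), (r ^ 2) ^ j := by
  induction i using Fin.induction with
  | zero => simp [hy0]
  | succ k ih =>
    rw [hy, ih, hz, Fin.val_succ, Fin.val_castSucc, geom_sum_succ (n := k + 1)]
    ring

theorem mul_geom_sum_eq_one_of_recurrence [CommRing R] [IsDomain R]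
    (hz : ∀ k : Fin n, z k.castSucc = r * z k.succ) (hy0 : y 0 = a * z 0)
    (hy : ∀ k : Fin n, y k.succ = r * y k.castSucc + a * z k.succ)
    (hlast : y (Fin.last n) = z (Fin.last n)) (hne : Sum.elim y z ≠ 0) :
    a * ∑ j ∈ range (n + 1), (r ^ 2) ^ j = 1 := by
  have hyz := eq_mul_geom_sum_of_recurrence hz hy0 hy
  have hzlast : z (Fin.last n) ≠ 0 := by
    intro h0
    have hz0 := eq_zero_of_castSucc_eq_mul_succ hz h0
    refine hne (funext fun i => ?_)
    rcases i with i | i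
    · simpa [hz0] using hyz i
    · simp [hz0]
  have h := hyz (Fin.last n)
  rw [hlast, Fin.val_last] at h
  exact mul_right_cancel₀ hzlast (by linear_combination -h)

end Recurrence

section Entries

variable {n : ℕ} (φ : ℝ) (v : Fin (n + 1) → ℂ)

theorem lowerBidiag_map_mulVec_zero : ((lowerBidiag (n + 1) φ).map ofReal *ᵥ v) 0 = v 0 := by
  rw [mulVec, dotProduct, Fintype.sum_eq_single 0 fun j hj => ?_]
  · simp [lowerBidiag]
  · simp [lowerBidiag, Ne.symm hj]

theorem lowerBidiag_map_mulVec_succ (k : Fin n) :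
    ((lowerBidiag (n + 1) φ).map ofReal *ᵥ v) k.succ = v k.succ - φ * v k.castSucc := by
  rw [mulVec, dotProduct,
    Fintype.sum_eq_add k.succ k.castSucc Fin.castSucc_lt_succ.ne' fun j hj => ?_]
  · simp [lowerBidiag, Fin.castSucc_lt_succ.ne']; ring
  · simp only [lowerBidiag, map_apply, Ne.symm hj.1, if_false]
    rw [if_neg, ofReal_zero, zero_mul]
    intro h
    exact hj.2 (Fin.ext (by simp only [Fin.val_castSucc, Fin.val_succ] at h ⊢; omega))

theorem vecMul_lowerBidiag_map_castSucc (k : Fin n) :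
    (v ᵥ* (lowerBidiag (n + 1) φ).map ofReal) k.castSucc = v k.castSucc - φ * v k.succ := by
  rw [vecMul, dotProduct,
    Fintype.sum_eq_add k.castSucc k.succ Fin.castSucc_lt_succ.ne fun j hj => ?_]
  · simp [lowerBidiag, Fin.castSucc_lt_succ.ne']; ring
  · simp only [lowerBidiag, map_apply, hj.1, if_false]
    rw [if_neg, ofReal_zero, mul_zero]
    intro h
    exact hj.2 (Fin.ext (by simp only [Fin.val_castSucc, Fin.val_succ] at h ⊢; omega))

theorem vecMul_lowerBidiag_map_last :
    (v ᵥ* (lowerBidiag (n + 1) φ).map ofReal) (Fin.last n) = v (Fin.last n) := by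
  rw [vecMul, dotProduct, Fintype.sum_eq_single (Fin.last n) fun j hj => ?_]
  · simp [lowerBidiag]
  · have := Fin.is_le j
    simp [lowerBidiag, hj]
    omega

theorem cornerMat_map_mulVec_castSucc (k : Fin n) :
    ((cornerMat (n + 1)).map ofReal *ᵥ v) k.castSucc = 0 := by
  simp [mulVec, dotProduct, cornerMat, k.is_lt.ne]

theorem cornerMat_map_mulVec_last :
    ((cornerMat (n + 1)).map ofReal *ᵥ v) (Fin.last n) = v (Fin.last n) := by
  rw [mulVec, dotProduct, Fintype.sum_eq_single (Fin.last n) fun j hj => ?_]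
  · simp [cornerMat]
  · simp [cornerMat, (Fin.val_lt_last hj).ne]

end Entries

theorem terminalMat_map_mulVec (L : ℕ) (φ ψ : ℝ) (x : Fin L ⊕ Fin L → ℂ) :
    (terminalMat L φ ψ).map ofReal *ᵥ x =
      Sum.elim ((lowerBidiag L φ).map ofReal *ᵥ (x ∘ Sum.inl) + (ψ : ℂ) • (x ∘ Sum.inr))
        (-((cornerMat L).map ofReal *ᵥ (x ∘ Sum.inl)) +
          (x ∘ Sum.inr) ᵥ* (lowerBidiag L φ).map ofReal) := by
  rw [terminalMat, fromBlocks_map, fromBlocks_mulVec, transpose_map, mulVec_transpose]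
  congr 2
  · ext i; simp [mulVec, dotProduct, Matrix.one_apply, apply_ite ofReal, ite_mul]
  · rw [← neg_mulVec, ← Matrix.map_neg _ ofReal_neg]

def TerminalCharEq (L : ℕ) (φ ψ φt ψt : ℝ) (lam : ℂ) : Prop :=
  lam = -(ψ - (1 - lam) * ψt) * ∑ j ∈ range L, (((φ - (1 - lam) * φt) / lam) ^ 2) ^ j

theorem terminalCharEq_of_mulVec_eq {L : ℕ} {φ ψ φt ψt : ℝ} {lam : ℂ}
    (hlam : lam ≠ 0) {x : Fin L ⊕ Fin L → ℂ} (hx : x ≠ 0)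
    (heq : (terminalMat L φ ψ).map ofReal *ᵥ x =
      (1 - lam) • (terminalMat L φt ψt).map ofReal *ᵥ x) :
    TerminalCharEq L φ ψ φt ψt lam := by
  rcases L with _ | n
  · exact absurd (Subsingleton.elim x 0) hx
  have row (i) := congrFun heq i
  simp only [terminalMat_map_mulVec, Pi.smul_apply, smul_eq_mul] at row
  set y := x ∘ Sum.inl
  set z := x ∘ Sum.inr
  have hz (k : Fin n) : z k.castSucc = (φ - (1 - lam) * φt) / lam * z k.succ := by
    have h := row (.inr k.castSucc)
    simp only [Sum.elim_inr, Pi.add_apply, Pi.neg_apply, cornerMat_map_mulVec_castSucc,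
      vecMul_lowerBidiag_map_castSucc] at h
    rw [div_mul_eq_mul_div, eq_div_iff hlam]
    linear_combination h
  have hy0 : y 0 = -(ψ - (1 - lam) * ψt) / lam * z 0 := by
    have h := row (.inl 0)
    simp only [Sum.elim_inl, Pi.add_apply, Pi.smul_apply, smul_eq_mul,
      lowerBidiag_map_mulVec_zero] at h
    rw [div_mul_eq_mul_div, eq_div_iff hlam]
    linear_combination h
  have hy (k : Fin n) : y k.succ = (φ - (1 - lam) * φt) / lam * y k.castSucc
      + -(ψ - (1 - lam) * ψt) / lam * z k.succ := by
    have h := row (.inl k.succ)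
    simp only [Sum.elim_inl, Pi.add_apply, Pi.smul_apply, smul_eq_mul,
      lowerBidiag_map_mulVec_succ] at h
    rw [div_mul_eq_mul_div, div_mul_eq_mul_div, ← add_div, eq_div_iff hlam]
    linear_combination h
  have hlast : y (Fin.last n) = z (Fin.last n) := by
    have h := row (.inr (Fin.last n))
    simp only [Sum.elim_inr, Pi.add_apply, Pi.neg_apply, cornerMat_map_mulVec_last,
      vecMul_lowerBidiag_map_last] at h
    exact mul_left_cancel₀ hlam (by linear_combination -h)
  have h := mul_geom_sum_eq_one_of_recurrence hz hy0 hy hlast (by simpa [y, z] using hx)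
  rw [div_mul_eq_mul_div, div_eq_one_iff_eq hlam] at h
  exact h.symm

namespace TerminalCharEq

variable {L : ℕ} {φ ψ φt ψt : ℝ} {lam : ℂ}

theorem im_eq_zero_of_same_phi (h : TerminalCharEq L φ ψ φ ψt lam) (hψt : 0 ≤ ψt)
    (hlam : lam ≠ 0) : lam.im = 0 := by
  have hr : ((φ : ℂ) - (1 - lam) * φ) / lam = φ := by field_simp; ring
  have hG : ∑ j ∈ range L, ((φ : ℂ) ^ 2) ^ j =
      ((∑ j ∈ range L, (φ ^ 2) ^ j : ℝ) : ℂ) := by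
    push_cast; rfl
  rw [TerminalCharEq, hr, hG] at h
  have hg : 0 ≤ ∑ j ∈ range L, (φ ^ 2) ^ j := by positivity
  have him := congrArg im h
  simp only [mul_im, neg_im, neg_re, sub_im, sub_re, ofReal_im, ofReal_re, one_im, one_re] at him
  nlinarith [mul_nonneg hψt hg]

theorem norm_le (h : TerminalCharEq L φ ψ φt ψt lam) (hφt0 : 0 < φt) (hφt1 : φt < 1)
    (hψt : 0 < ψt) (hlam : lam.im ≠ 0) : ‖lam‖ ≤ |φ - φt| / (1 - φt) := by
  have hlam0 : lam ≠ 0 := by rintro rfl; simp at hlam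
  by_contra! hlt
  rcases eq_or_ne φ φt with rfl | hd
  · exact hlam (h.im_eq_zero_of_same_phi hψt.le hlam0)
  rw [TerminalCharEq] at h
  set r := ((φ : ℂ) - (1 - lam) * φt) / lam with hr
  have hrd : (r - φt) * lam = (φ - φt : ℝ) := by
    rw [hr]; field_simp; push_cast; ring
  clear_value r
  have hdisk : ‖r - φt‖ < 1 - φt := by
    have h1 : ‖r - φt‖ * ‖lam‖ = |φ - φt| := by
      rw [← norm_mul, hrd, norm_real, Real.norm_eq_abs]
    have h2 : |φ - φt| < (1 - φt) * ‖lam‖ := by rwa [div_lt_iff₀' (by linarith)] at hlt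
    exact lt_of_mul_lt_mul_right (h1 ▸ h2) (norm_nonneg lam)
  have hrim : r.im ≠ 0 := by
    intro h0
    have him := congrArg im hrd
    simp only [mul_im, sub_re, sub_im, ofReal_re, ofReal_im, h0, sub_zero, zero_mul,
      add_zero] at him
    have hre : r.re - φt = 0 := (mul_eq_zero.mp him).resolve_right hlam
    have hr0 : r - φt = 0 := Complex.ext (by simpa using hre) (by simpa using h0)
    rw [hr0, zero_mul, eq_comm, ofReal_eq_zero, sub_eq_zero] at hrd
    exact hd hrd
  refine one_add_mul_geom_sum_sq_ne hφt0.le hdisk hrim hψt L (-(ψ - ψt) / (φ - φt)) ?_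
  have hd' : ((φ - φt : ℝ) : ℂ) ≠ 0 := ofReal_ne_zero.mpr (sub_ne_zero.mpr hd)
  rw [ofReal_div, div_mul_eq_mul_div, eq_div_iff hd']
  push_cast at hrd ⊢
  linear_combination (r - φt) * h - (1 + ψt * ∑ j ∈ range L, (r ^ 2) ^ j) * hrd

end TerminalCharEq

theorem terminal_cost_paraopt_nonreal_eigenvalue_bound_general
    (L : ℕ) (φ ψ φt ψt : ℝ)
    (hφt0 : 0 < φt) (hφt1 : φt < 1)
    (hψt : 0 < ψt)
    (lam : ℂ) (hlam : lam.im ≠ 0) (x : (Fin L ⊕ Fin L) → ℂ) (hx : x ≠ 0)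
    (heq : ((terminalMat L φ ψ).map Complex.ofReal).mulVec x =
      (1 - lam) • ((terminalMat L φt ψt).map Complex.ofReal).mulVec x) :
    ‖lam‖ ≤ |φ - φt| / (1 - φt) := by
  have hlam0 : lam ≠ 0 := by rintro rfl; simp at hlam
  exact (terminalCharEq_of_mulVec_eq hlam0 hx heq).norm_le hφt0 hφt1 hψt hlam

theorem terminal_cost_paraopt_nonreal_eigenvalue_bound
    (L : ℕ) (hL : 1 ≤ L) (φ ψ φt ψt : ℝ)
    (hφ0 : 0 < φ) (hφ1 : φ < 1) (hφt0 : 0 < φt) (hφt1 : φt < 1)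
    (hψ : 0 < ψ) (hψt : 0 < ψt)
    (lam : ℂ) (hlam : lam.im ≠ 0) (x : (Fin L ⊕ Fin L) → ℂ) (hx : x ≠ 0)
    (heq : ((terminalMat L φ ψ).map Complex.ofReal).mulVec x =
      (1 - lam) • ((terminalMat L φt ψt).map Complex.ofReal).mulVec x) :
    ‖lam‖ ≤ |φ - φt| / (1 - φt) :=
  terminal_cost_paraopt_nonreal_eigenvalue_bound_general L φ ψ φt ψt hφt0 hφt1 hψt lam hlam x hx heq
end

section
/- Let L ≥ 1 be an integer and let φ, φ̃ ∈ (0,1) and ψ, ψ̃ > 0 be real numbers. Then for every λ ∈ ℂ and every nonzero vector x ∈ ℂ^{2L} satisfying A_L^T(φ,ψ) x = (1−λ) A_L^T(φ̃,ψ̃) x, one has |λ| ≤ max( |φ−φ̃| / (1−φ̃), |ψ̃−ψ| / ψ̃ ). (This is the terminal-cost ParaOpt convergence bound, with the real-eigenvalue bound weakened to |ψ̃−ψ|/ψ̃.) -/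
open Matrix

open Complex Finset
set_option maxHeartbeats 1000000

-- main positive-imaginary-part case
lemma keyM_pos (L : ℕ) (c ψt : ℝ) (hc0 : 0 < c) (hc1 : c < 1) (hψt : 0 < ψt)
    (τ κ : ℂ) (hτim : 0 < τ.im) (hτ : ‖τ‖ ≤ 1 - c)
    (hκ : ‖κ + ψt‖ < ψt)
    (β : ℝ) (hlink : κ + (ψt:ℂ) = (β:ℂ) * τ)
    (hS : κ * (∑ j ∈ range L, ((c:ℂ) + τ)^(2*j)) = 1) : False := by
  have hτ0 : τ ≠ 0 := fun h => by simp [h] at hτim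
  obtain ⟨r, hr⟩ : ∃ r : ℝ, r = ‖τ‖ := ⟨_, rfl⟩
  rw [← hr] at hτ
  have hr0 : 0 < r := by rw [hr]; exact (norm_pos_iff.mpr hτ0)
  obtain ⟨w, hw⟩ : ∃ w : ℂ, w = τ / r := ⟨_, rfl⟩
  have hwabs : ‖w‖ = 1 := by
    rw [hw, norm_div, Complex.norm_real, Real.norm_eq_abs, abs_of_pos hr0, hr]
    exact div_self (norm_ne_zero_iff.mpr hτ0)
  have hwim : 0 < w.im := by
    rw [hw, Complex.div_im]
    simp only [Complex.ofReal_re, Complex.ofReal_im, Complex.normSq_ofReal,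
      mul_zero, zero_div, sub_zero, zero_mul, add_zero]
    positivity
  have hwnsq : w.re^2 + w.im^2 = 1 := by
    have := Complex.normSq_eq_norm_sq w
    rw [hwabs] at this
    simpa [Complex.normSq_apply, sq] using this
  have hwre : -1 < w.re := by nlinarith [sq_nonneg (w.re + 1)]
  obtain ⟨h, hh⟩ : ∃ h : ℝ, h = Real.sqrt (2 + 2*w.re) := ⟨_, rfl⟩
  have hh0 : 0 < h := hh ▸ Real.sqrt_pos.2 (by linarith)
  have hh2 : h^2 = 2 + 2*w.re := hh ▸ Real.sq_sqrt (by linarith)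
  obtain ⟨η, hη⟩ : ∃ η : ℂ, η = ((h⁻¹ : ℝ) : ℂ) * (w + 1) := ⟨_, rfl⟩
  obtain ⟨X, hX⟩ : ∃ X : ℝ, X = η.re := ⟨_, rfl⟩
  obtain ⟨Y, hY⟩ : ∃ Y : ℝ, Y = η.im := ⟨_, rfl⟩
  have hxval : X = h⁻¹ * (w.re + 1) := by
    rw [hX, hη]; simp [Complex.mul_re, Complex.ofReal_re, Complex.ofReal_im]
  have hyval : Y = h⁻¹ * w.im := by
    rw [hY, hη]; simp [Complex.mul_im, Complex.ofReal_re, Complex.ofReal_im]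
  have hx0 : 0 < X := by
    rw [hxval]; exact mul_pos (inv_pos.2 hh0) (by linarith)
  have hy0 : 0 < Y := by rw [hyval]; positivity
  have hxy : X^2 + Y^2 = 1 := by
    rw [hxval, hyval]
    have : h⁻¹^2 * (h^2) = 1 := by field_simp
    nlinarith [hwnsq, hh2]
  have hη2 : η^2 = w := by
    have hwconj : w * (starRingEnd ℂ) w = 1 := by
      rw [Complex.mul_conj]
      rw [Complex.normSq_eq_norm_sq, hwabs]; norm_num
    have h2re : ((2:ℂ) + 2*w.re) = w + (starRingEnd ℂ) w + 2 := by
      rw [Complex.add_conj]; push_cast; ring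
    have hhc : ((h:ℝ):ℂ)^2 = (2:ℂ) + 2*w.re := by
      rw [← Complex.ofReal_pow, hh2]; push_cast; ring
    have hhne : ((h:ℝ):ℂ) ≠ 0 := by
      simpa using hh0.ne'
    have e1' : (((h⁻¹:ℝ)):ℂ) * ((h:ℝ):ℂ) = 1 := by
      rw [← Complex.ofReal_mul, inv_mul_cancel₀ hh0.ne']; norm_num
    rw [hη]
    linear_combination (w * ((((h⁻¹:ℝ)):ℂ)*((h:ℝ):ℂ) + 1)) * e1' +
      (-(((h⁻¹:ℝ)):ℂ)^2*w) * hhc + (-(((h⁻¹:ℝ)):ℂ)^2*w) * h2re +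
      (-(((h⁻¹:ℝ)):ℂ)^2) * hwconj
  have hrne : (r:ℂ) ≠ 0 := by exact_mod_cast hr0.ne'
  have hτη : τ = (r:ℂ) * η^2 := by
    rw [hη2, hw, mul_div_cancel₀ _ hrne]
  obtain ⟨z, hz⟩ : ∃ z : ℂ, z = (c:ℂ) + τ := ⟨_, rfl⟩
  rw [show ((c:ℂ) + τ) = z from hz.symm] at hS
  have hnsqη : Complex.normSq η = 1 := by
    rw [Complex.normSq_apply, ← hX, ← hY]; nlinarith [hxy]
  have he : ((starRingEnd ℂ) η) * η = 1 := by
    rw [mul_comm, Complex.mul_conj, hnsqη]; norm_num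
  have hconjz : (starRingEnd ℂ) z = (c:ℂ) + (r:ℂ) * ((starRingEnd ℂ) η)^2 := by
    rw [hz, hτη]
    simp [_root_.map_add, _root_.map_mul, Complex.conj_ofReal, _root_.map_pow]
  obtain ⟨C, hC⟩ : ∃ C : ℂ, C = (1 - ((starRingEnd ℂ) z)^2) * η := ⟨_, rfl⟩
  have hCid : C = (((1-c^2 : ℝ)):ℂ)*η - (((2*c*r : ℝ)):ℂ)*((starRingEnd ℂ) η)
      - (((r^2 : ℝ)):ℂ)*(((starRingEnd ℂ) η)*((starRingEnd ℂ) η)*((starRingEnd ℂ) η)) := by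
    rw [hC, hconjz]
    push_cast
    linear_combination (-2*(c:ℂ)*(r:ℂ)*((starRingEnd ℂ) η)
      - (r:ℂ)^2*((starRingEnd ℂ) η)*((starRingEnd ℂ) η)*((starRingEnd ℂ) η)) * he
  have hCre : C.re = X*((1-c^2) - 2*c*r - r^2*(X^2-3*Y^2)) := by
    rw [hCid]
    simp only [Complex.sub_re, Complex.re_ofReal_mul, Complex.mul_re, Complex.mul_im,
      Complex.conj_re, Complex.conj_im, Complex.ofReal_re, Complex.ofReal_im, ← hX, ← hY]
    ring
  have hCim : C.im = Y*((1-c^2) + 2*c*r + r^2*(3*X^2-Y^2)) := by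
    rw [hCid]
    simp only [Complex.sub_im, Complex.im_ofReal_mul, Complex.mul_re, Complex.mul_im,
      Complex.conj_re, Complex.conj_im, Complex.ofReal_re, Complex.ofReal_im, ← hX, ← hY]
    ring
  have hfac : (0:ℝ) ≤ (1-c-r)*(1+c+r) := by
    apply mul_nonneg <;> nlinarith
  have hCre0 : 0 ≤ C.re := by
    rw [hCre]
    apply mul_nonneg hx0.le
    nlinarith [sq_nonneg (r*Y), hxy]
  have hCim0 : 0 ≤ C.im := by
    rw [hCim]
    apply mul_nonneg hy0.le
    nlinarith [sq_nonneg (r*X), hxy, mul_pos hc0 hr0]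
  obtain ⟨B, hB⟩ : ∃ B : ℂ, B = 1 - z^(2*L) := ⟨_, rfl⟩
  have hzabs : ‖z‖ ≤ 1 := by
    rw [hz]
    calc ‖(c:ℂ) + τ‖ ≤ ‖(c:ℂ)‖ + ‖τ‖ := norm_add_le _ _
    _ = c + r := by rw [Complex.norm_real, Real.norm_eq_abs, abs_of_pos hc0, hr]
    _ ≤ 1 := by linarith
  have hBre0 : 0 ≤ B.re := by
    have h1 : (z^(2*L)).re ≤ 1 := by
      calc (z^(2*L)).re ≤ ‖z^(2*L)‖ := Complex.re_le_norm _
      _ = (‖z‖)^(2*L) := by rw [norm_pow]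
      _ ≤ 1 := pow_le_one₀ (norm_nonneg _) hzabs
    rw [hB]
    simp only [Complex.sub_re, Complex.one_re]
    linarith
  obtain ⟨A, hA⟩ : ∃ A : ℂ, A = 1 - z^2 := ⟨_, rfl⟩
  have hzim : z.im = τ.im := by rw [hz]; simp
  have hA0 : A ≠ 0 := by
    intro h0
    have hz2 : (z-1)*(z+1) = 0 := by
      have h1 : z^2 = 1 := by rw [hA] at h0; linear_combination -h0
      linear_combination h1
    rcases mul_eq_zero.1 hz2 with h1 | h1
    · have : z = 1 := by linear_combination h1
      rw [this] at hzim; simp at hzim; exact absurd hzim.symm hτim.ne'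
    · have : z = -1 := by linear_combination h1
      rw [this] at hzim; simp at hzim; exact absurd hzim.symm hτim.ne'
  obtain ⟨S, hSdef⟩ : ∃ S : ℂ, S = ∑ j ∈ range L, z^(2*j) := ⟨_, rfl⟩
  rw [← hSdef] at hS
  have hSA : S * A = B := by
    have hgeo : (∑ j ∈ range L, (z^2)^j) * (z^2 - 1) = (z^2)^L - 1 := geom_sum_mul _ _
    have e1 : (∑ j ∈ range L, (z^2)^j) = S := by
      rw [hSdef]; exact Finset.sum_congr rfl fun j _ => (pow_mul z 2 j).symm
    rw [e1, ← pow_mul] at hgeo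
    rw [hA, hB]
    linear_combination -hgeo
  have hκτ : κ = (β:ℂ)*((r:ℂ)*η^2) - (ψt:ℂ) := by
    rw [← hτη]; linear_combination hlink
  have hβr : |β| * r < ψt := by
    have h2 := hκ
    rw [hlink, norm_mul, Complex.norm_real, Real.norm_eq_abs, ← hr] at h2
    exact h2
  have hconjκ : (starRingEnd ℂ) κ = (β:ℂ)*((r:ℂ)*((starRingEnd ℂ) η)^2) - (ψt:ℂ) := by
    rw [hκτ]
    simp [_root_.map_sub, _root_.map_mul, Complex.conj_ofReal, _root_.map_pow]
  obtain ⟨G, hG⟩ : ∃ G : ℂ, G = η * ((starRingEnd ℂ) κ) := ⟨_, rfl⟩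
  have hGid : G = (β:ℂ)*(r:ℂ)*((starRingEnd ℂ) η) - (ψt:ℂ)*η := by
    rw [hG, hconjκ]
    linear_combination ((β:ℂ)*(r:ℂ)*((starRingEnd ℂ) η)) * he
  have hGre : G.re = X*(β*r - ψt) := by
    rw [hG] at hGid
    rw [hG, hGid]
    simp [Complex.sub_re, Complex.mul_re, Complex.ofReal_re, Complex.ofReal_im,
      Complex.conj_re, Complex.conj_im, ← hX, ← hY]
    ring
  have hGim : G.im = -Y*(β*r + ψt) := by
    rw [hGid]
    simp [Complex.sub_im, Complex.mul_im, Complex.ofReal_re, Complex.ofReal_im,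
      Complex.conj_re, Complex.conj_im, ← hX, ← hY]
    ring
  have hGre0 : G.re < 0 := by
    rw [hGre]
    apply mul_neg_of_pos_of_neg hx0
    nlinarith [le_abs_self β, hr0]
  have hGim0 : G.im < 0 := by
    rw [hGim]
    have : -|β| * r ≤ β * r := by nlinarith [neg_abs_le β]
    nlinarith
  obtain ⟨W, hW⟩ : ∃ W : ℂ, W = B * (((starRingEnd ℂ) A) * η) := ⟨_, rfl⟩
  have hWC : W = B * C := by
    rw [hW, hC]
    congr 2
    rw [hA]
    simp [_root_.map_sub, _root_.map_pow, _root_.map_one]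
  have hWsign : ¬(W.re < 0 ∧ W.im < 0) := by
    rintro ⟨h1, h2⟩
    rcases le_or_gt 0 B.im with hb | hb
    · have : 0 ≤ W.im := by
        rw [hWC, Complex.mul_im]
        have := mul_nonneg hBre0 hCim0
        have := mul_nonneg hb hCre0
        linarith
      linarith
    · have : 0 ≤ W.re := by
        rw [hWC, Complex.mul_re]
        have := mul_nonneg hBre0 hCre0
        have h3 : 0 ≤ -B.im * C.im := mul_nonneg (by linarith) hCim0
        linarith
      linarith
  have hκ0 : κ ≠ 0 := by
    intro h0; rw [h0] at hS; simp at hS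
  have hWκ : W * κ = ((Complex.normSq A : ℝ):ℂ) * η := by
    have step : W * κ = (κ * S) * (A * ((starRingEnd ℂ) A)) * η := by
      rw [hW, ← hSA]; ring
    rw [step, hS, Complex.mul_conj]; ring
  have hWG : W * ((Complex.normSq κ : ℝ):ℂ) = ((Complex.normSq A : ℝ):ℂ) * G := by
    calc W * ((Complex.normSq κ : ℝ):ℂ) = (W * κ) * ((starRingEnd ℂ) κ) := by
          rw [mul_assoc, Complex.mul_conj]
      _ = ((Complex.normSq A : ℝ):ℂ) * G := by rw [hWκ, hG]; ring
  have hnκ : (0:ℝ) < Complex.normSq κ := Complex.normSq_pos.2 hκ0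
  have hnA : (0:ℝ) < Complex.normSq A := Complex.normSq_pos.2 hA0
  have hre : W.re * Complex.normSq κ = Complex.normSq A * G.re := by
    have h9 := congrArg Complex.re hWG
    simpa [Complex.mul_re, Complex.ofReal_re, Complex.ofReal_im] using h9
  have him : W.im * Complex.normSq κ = Complex.normSq A * G.im := by
    have h9 := congrArg Complex.im hWG
    simpa [Complex.mul_im, Complex.ofReal_re, Complex.ofReal_im] using h9
  apply hWsign
  refine ⟨?_, ?_⟩
  · have h5 : W.re * Complex.normSq κ < 0 := by
      rw [hre]; exact mul_neg_of_pos_of_neg hnA hGre0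
    by_contra hcon
    push_neg at hcon
    exact absurd h5 (not_lt.2 (mul_nonneg hcon hnκ.le))
  · have h5 : W.im * Complex.normSq κ < 0 := by
      rw [him]; exact mul_neg_of_pos_of_neg hnA hGim0
    by_contra hcon
    push_neg at hcon
    exact absurd h5 (not_lt.2 (mul_nonneg hcon hnκ.le))


lemma keyM (L : ℕ) (c ψt : ℝ) (hc0 : 0 < c) (hc1 : c < 1) (hψt : 0 < ψt)
    (τ κ : ℂ) (hτ : ‖τ‖ ≤ 1 - c) (hκ : ‖κ + ψt‖ < ψt)
    (hlink : τ = 0 ∨ ∃ β : ℝ, κ + (ψt:ℂ) = (β:ℂ) * τ)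
    (hS : κ * (∑ j ∈ range L, ((c:ℂ) + τ)^(2*j)) = 1) : False := by
  rcases lt_trichotomy τ.im 0 with hneg | hzero | hpos
  · rcases hlink with h0 | ⟨β, hβ⟩
    · rw [h0] at hneg; simp at hneg
    · have hadd : (starRingEnd ℂ) κ + (ψt:ℂ) = (starRingEnd ℂ) (κ + (ψt:ℂ)) := by
        rw [_root_.map_add, Complex.conj_ofReal]
      have h1 : 0 < ((starRingEnd ℂ) τ).im := by
        simpa [Complex.conj_im] using neg_pos.2 hneg
      have h2 : ‖(starRingEnd ℂ) τ‖ ≤ 1 - c := by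
        simpa [Complex.norm_conj] using hτ
      have h3 : ‖(starRingEnd ℂ) κ + (ψt:ℂ)‖ < ψt := by
        rw [hadd, Complex.norm_conj]; exact hκ
      have h4 : (starRingEnd ℂ) κ + (ψt:ℂ) = (β:ℂ) * (starRingEnd ℂ) τ := by
        rw [hadd, hβ, _root_.map_mul, Complex.conj_ofReal]
      have h5 : (starRingEnd ℂ) κ *
          (∑ j ∈ range L, ((c:ℂ) + (starRingEnd ℂ) τ)^(2*j)) = 1 := by
        have h6 := congrArg (starRingEnd ℂ) hS
        simpa [_root_.map_mul, _root_.map_sum, _root_.map_pow, _root_.map_add, Complex.conj_ofReal] using h6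
      exact keyM_pos L c ψt hc0 hc1 hψt _ _ h1 h2 h3 β h4 h5
  · -- real case
    have hτr : τ = ((τ.re : ℝ) : ℂ) := by
      apply Complex.ext <;> simp [hzero]
    set m : ℝ := c + τ.re with hm
    have hsum : (∑ j ∈ range L, ((c:ℂ) + τ)^(2*j)) =
        (((∑ j ∈ range L, m^(2*j) : ℝ)) : ℂ) := by
      rw [hτr]
      push_cast
      exact Finset.sum_congr rfl fun j _ => by rw [hm]; push_cast; ring
    set Sr : ℝ := ∑ j ∈ range L, m^(2*j) with hSr
    rw [hsum] at hS
    have hSr0 : 0 ≤ Sr := by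
      apply Finset.sum_nonneg
      intro j _
      rw [mul_comm, pow_mul]
      positivity
    have hSrne : Sr ≠ 0 := by
      intro h0
      rw [h0] at hS
      simp at hS
    have hSrCne : ((Sr:ℝ):ℂ) ≠ 0 := by exact_mod_cast hSrne
    have hκval : κ = ((Sr⁻¹ : ℝ) : ℂ) := by
      push_cast
      field_simp
      linear_combination hS
    have hre : (κ + (ψt:ℂ)).re = Sr⁻¹ + ψt := by
      rw [hκval]; simp
    have : Sr⁻¹ + ψt ≤ ‖κ + ψt‖ := hre ▸ Complex.re_le_norm _
    have hinv : 0 ≤ Sr⁻¹ := inv_nonneg.2 hSr0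
    linarith
  · rcases hlink with h0 | ⟨β, hβ⟩
    · rw [h0] at hpos; simp at hpos
    · exact keyM_pos L c ψt hc0 hc1 hψt τ κ hpos hτ hκ β hβ hS

lemma top_row (L : ℕ) (φ ψ : ℝ) (x : Fin L ⊕ Fin L → ℂ) (i : Fin L) :
    (((terminalMat L φ ψ).map Complex.ofReal).mulVec x) (Sum.inl i)
      = (x (Sum.inl i) - (φ:ℂ) * ∑ j : Fin L, (if (i:ℕ) = (j:ℕ)+1 then x (Sum.inl j) else 0))
        + (ψ:ℂ) * x (Sum.inr i) := by
  simp only [Matrix.mulVec, dotProduct, Fintype.sum_sum_type]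
  have h1 : ∀ j : Fin L,
      ((terminalMat L φ ψ).map Complex.ofReal) (Sum.inl i) (Sum.inl j) * x (Sum.inl j)
      = (if i = j then x (Sum.inl j) else 0)
        - (φ:ℂ) * (if (i:ℕ) = (j:ℕ)+1 then x (Sum.inl j) else 0) := by
    intro j
    simp only [Matrix.map_apply, terminalMat, Matrix.fromBlocks_apply₁₁, lowerBidiag]
    rcases em (i = j) with h | h
    · have hne : ¬((i:ℕ) = (j:ℕ)+1) := by rw [h]; omega
      simp [h, hne]
    · rcases em ((i:ℕ) = (j:ℕ)+1) with h2 | h2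
      · simp [h, h2]
      · simp [h, h2]
  have h2 : ∀ j : Fin L,
      ((terminalMat L φ ψ).map Complex.ofReal) (Sum.inl i) (Sum.inr j) * x (Sum.inr j)
      = (ψ:ℂ) * (if i = j then x (Sum.inr j) else 0) := by
    intro j
    simp only [Matrix.map_apply, terminalMat, Matrix.fromBlocks_apply₁₂,
      Matrix.smul_apply, Matrix.one_apply, smul_eq_mul]
    rcases em (i = j) with h | h
    · simp [h]
    · simp [h]
  rw [Finset.sum_congr rfl (fun j _ => h1 j), Finset.sum_congr rfl (fun j _ => h2 j)]
  rw [Finset.sum_sub_distrib, ← Finset.mul_sum, ← Finset.mul_sum]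
  rw [Finset.sum_ite_eq, Finset.sum_ite_eq]
  simp

lemma bottom_row (L : ℕ) (φ ψ : ℝ) (x : Fin L ⊕ Fin L → ℂ) (i : Fin L) :
    (((terminalMat L φ ψ).map Complex.ofReal).mulVec x) (Sum.inr i)
      = -(if (i:ℕ) = L-1 then x (Sum.inl i) else 0)
        + (x (Sum.inr i) - (φ:ℂ) * ∑ j : Fin L, (if (j:ℕ) = (i:ℕ)+1 then x (Sum.inr j) else 0)) := by
  simp only [Matrix.mulVec, dotProduct, Fintype.sum_sum_type]
  have h1 : ∀ j : Fin L,
      ((terminalMat L φ ψ).map Complex.ofReal) (Sum.inr i) (Sum.inl j) * x (Sum.inl j)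
      = -(if (i:ℕ) = L-1 ∧ (j:ℕ) = L-1 then x (Sum.inl j) else 0) := by
    intro j
    simp only [Matrix.map_apply, terminalMat, Matrix.fromBlocks_apply₂₁, cornerMat,
      Matrix.neg_apply]
    rcases em ((i:ℕ) = L-1 ∧ (j:ℕ) = L-1) with h | h
    · simp [h]
    · simp [h]
  have h2 : ∀ j : Fin L,
      ((terminalMat L φ ψ).map Complex.ofReal) (Sum.inr i) (Sum.inr j) * x (Sum.inr j)
      = (if j = i then x (Sum.inr j) else 0)
        - (φ:ℂ) * (if (j:ℕ) = (i:ℕ)+1 then x (Sum.inr j) else 0) := by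
    intro j
    simp only [Matrix.map_apply, terminalMat, Matrix.fromBlocks_apply₂₂,
      Matrix.transpose_apply, lowerBidiag]
    rcases em (j = i) with h | h
    · have hne : ¬((j:ℕ) = (i:ℕ)+1) := by rw [h]; omega
      simp [h, hne]
    · rcases em ((j:ℕ) = (i:ℕ)+1) with h2 | h2
      · simp [h, h2]
      · simp [h, h2]
  rw [Finset.sum_congr rfl (fun j _ => h1 j), Finset.sum_congr rfl (fun j _ => h2 j)]
  have hc : (∑ j : Fin L, -(if (i:ℕ) = L-1 ∧ (j:ℕ) = L-1 then x (Sum.inl j) else 0))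
      = -(if (i:ℕ) = L-1 then x (Sum.inl i) else 0) := by
    rw [Finset.sum_neg_distrib]
    congr 1
    rcases em ((i:ℕ) = L-1) with h | h
    · rw [if_pos h, Finset.sum_eq_single i]
      · rw [if_pos ⟨h, h⟩]
      · intro j _ hj
        rw [if_neg]
        rintro ⟨-, hj2⟩
        exact hj (Fin.ext (by omega))
      · intro hmem; exact absurd (Finset.mem_univ _) hmem
    · rw [if_neg h, Finset.sum_eq_zero]
      intro j _
      rw [if_neg]
      rintro ⟨h1', -⟩
      exact h h1'
  rw [hc, Finset.sum_sub_distrib, ← Finset.mul_sum, Finset.sum_ite_eq' Finset.univ i]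
  simp

theorem terminal_cost_paraopt_eigenvalue_bound
    (L : ℕ) (hL : 1 ≤ L) (φ ψ φt ψt : ℝ)
    (hφ0 : 0 < φ) (hφ1 : φ < 1) (hφt0 : 0 < φt) (hφt1 : φt < 1)
    (hψ : 0 < ψ) (hψt : 0 < ψt)
    (lam : ℂ) (x : (Fin L ⊕ Fin L) → ℂ) (hx : x ≠ 0)
    (heq : ((terminalMat L φ ψ).map Complex.ofReal).mulVec x =
      (1 - lam) • ((terminalMat L φt ψt).map Complex.ofReal).mulVec x) :
    ‖lam‖ ≤ max (|φ - φt| / (1 - φt)) (|ψt - ψ| / ψt) := by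
  by_contra hcon
  push_neg at hcon
  have h1φt : (0:ℝ) < 1 - φt := by linarith
  have habs1 : |φ - φt| < ‖lam‖ * (1 - φt) := by
    have h2 : |φ - φt| / (1 - φt) < ‖lam‖ :=
      lt_of_le_of_lt (le_max_left _ _) hcon
    rwa [div_lt_iff₀ h1φt] at h2
  have habs2 : |ψt - ψ| < ‖lam‖ * ψt := by
    have h2 : |ψt - ψ| / ψt < ‖lam‖ :=
      lt_of_le_of_lt (le_max_right _ _) hcon
    rwa [div_lt_iff₀ hψt] at h2
  have hlam0 : lam ≠ 0 := by
    intro h0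
    rw [h0] at hcon
    simp only [norm_zero] at hcon
    have : (0:ℝ) ≤ |φ - φt| / (1 - φt) := by positivity
    have : (0:ℝ) ≤ max (|φ - φt| / (1 - φt)) (|ψt - ψ| / ψt) :=
      le_trans this (le_max_left _ _)
    linarith
  have hpt : ∀ s, ((terminalMat L φ ψ).map Complex.ofReal).mulVec x s
      = (1-lam) * (((terminalMat L φt ψt).map Complex.ofReal).mulVec x) s := by
    intro s
    rw [heq]
    simp
  -- complex parameters
  set μ : ℂ := (φt:ℂ) + ((φ:ℂ) - (φt:ℂ))/lam with hμ
  set κ : ℂ := ((ψt:ℂ) - (ψ:ℂ))/lam - (ψt:ℂ) with hκ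
  -- normalized recurrences
  have N0 : x (Sum.inl (⟨0, by omega⟩ : Fin L)) = κ * x (Sum.inr (⟨0, by omega⟩ : Fin L)) := by
    have h2 := hpt (Sum.inl (⟨0, by omega⟩ : Fin L))
    rw [top_row, top_row] at h2
    have hP : (∑ j : Fin L, if (((⟨0, by omega⟩ : Fin L)):ℕ) = (j:ℕ)+1
        then x (Sum.inl j) else 0) = 0 := by
      apply Finset.sum_eq_zero
      intro j _
      rw [if_neg]
      simp
    rw [hP] at h2
    rw [hκ]
    field_simp [hlam0]
    linear_combination h2
  have N1 : ∀ n, (hn : n + 1 < L) → x (Sum.inl (⟨n+1, hn⟩ : Fin L))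
      = μ * x (Sum.inl (⟨n, by omega⟩ : Fin L)) + κ * x (Sum.inr (⟨n+1, hn⟩ : Fin L)) := by
    intro n hn
    have h2 := hpt (Sum.inl (⟨n+1, hn⟩ : Fin L))
    rw [top_row, top_row] at h2
    have hP : (∑ j : Fin L, if (((⟨n+1, hn⟩ : Fin L)):ℕ) = (j:ℕ)+1
        then x (Sum.inl j) else 0) = x (Sum.inl (⟨n, by omega⟩ : Fin L)) := by
      rw [Finset.sum_eq_single (⟨n, by omega⟩ : Fin L)]
      · simp
      · intro j _ hj
        rw [if_neg]
        intro hc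
        exact hj (Fin.ext (by simpa using hc.symm))
      · intro hmem; exact absurd (Finset.mem_univ _) hmem
    rw [hP] at h2
    rw [hμ, hκ]
    field_simp [hlam0]
    linear_combination h2
  have N2 : ∀ n, (hn : n + 1 < L) → x (Sum.inr (⟨n, by omega⟩ : Fin L))
      = μ * x (Sum.inr (⟨n+1, hn⟩ : Fin L)) := by
    intro n hn
    have h2 := hpt (Sum.inr (⟨n, by omega⟩ : Fin L))
    rw [bottom_row, bottom_row] at h2
    have hQ : (∑ j : Fin L, if (j:ℕ) = (((⟨n, by omega⟩ : Fin L)):ℕ)+1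
        then x (Sum.inr j) else 0) = x (Sum.inr (⟨n+1, hn⟩ : Fin L)) := by
      rw [Finset.sum_eq_single (⟨n+1, hn⟩ : Fin L)]
      · simp
      · intro j _ hj
        rw [if_neg]
        intro hc
        exact hj (Fin.ext (by simpa using hc))
      · intro hmem; exact absurd (Finset.mem_univ _) hmem
    have hE : ¬((((⟨n, by omega⟩ : Fin L)):ℕ) = L-1) := by simp only [Fin.val_mk]; omega
    rw [hQ, if_neg hE] at h2
    rw [hμ]
    field_simp [hlam0]
    linear_combination h2
  have N3 : x (Sum.inr (⟨L-1, by omega⟩ : Fin L)) = x (Sum.inl (⟨L-1, by omega⟩ : Fin L)) := by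
    have h2 := hpt (Sum.inr (⟨L-1, by omega⟩ : Fin L))
    rw [bottom_row, bottom_row] at h2
    have hQ : (∑ j : Fin L, if (j:ℕ) = (((⟨L-1, by omega⟩ : Fin L)):ℕ)+1
        then x (Sum.inr j) else 0) = 0 := by
      apply Finset.sum_eq_zero
      intro j _
      have hj := j.isLt
      rw [if_neg]
      simp only [Fin.val_mk]
      omega
    have hE : ((((⟨L-1, by omega⟩ : Fin L)):ℕ) = L-1) := rfl
    rw [hQ, if_pos hE] at h2
    have h3 : lam * (x (Sum.inr (⟨L-1, by omega⟩ : Fin L))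
        - x (Sum.inl (⟨L-1, by omega⟩ : Fin L))) = 0 := by
      linear_combination h2
    rcases mul_eq_zero.1 h3 with h4 | h4
    · exact absurd h4 hlam0
    · linear_combination h4
    -- backward induction for V
  have hVk : ∀ k n (hn : n + k = L - 1), x (Sum.inr (⟨n, by omega⟩ : Fin L))
      = μ^k * x (Sum.inr (⟨L-1, by omega⟩ : Fin L)) := by
    intro k
    induction k with
    | zero =>
      intro n hn
      have hnn : n = L - 1 := by omega
      subst hnn
      simp
    | succ k ih =>
      intro n hn
      have hn1 : n + 1 < L := by omega
      rw [N2 n hn1, ih (n+1) (by omega)]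
      ring
  -- forward induction for U
  have hUn : ∀ n (hn : n < L), x (Sum.inl (⟨n, hn⟩ : Fin L))
      = κ * μ^(L-1-n) * (∑ m ∈ range (n+1), μ^(2*m))
        * x (Sum.inr (⟨L-1, by omega⟩ : Fin L)) := by
    intro n
    induction n with
    | zero =>
      intro hn
      rw [N0, hVk (L-1) 0 (by omega)]
      simp only [zero_add, Finset.sum_range_one, mul_zero, pow_zero, Nat.sub_zero, mul_one]
      ring
    | succ n ih =>
      intro hn
      rw [N1 n hn, ih (by omega), hVk (L-1-(n+1)) (n+1) (by omega)]
      have e1 : L - 1 - n = (L - 1 - (n+1)) + 1 := by omega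
      have e2 : (∑ m ∈ range (n+1+1), μ^(2*m))
          = μ^2 * (∑ m ∈ range (n+1), μ^(2*m)) + 1 := by
        rw [Finset.sum_range_succ']
        simp only [mul_zero, pow_zero]
        congr 1
        rw [Finset.mul_sum]
        apply Finset.sum_congr rfl
        intro m _
        rw [← pow_add]
        congr 1
        ring
      rw [e1, e2, pow_succ]
      ring
  -- conclusion
  have hU := hUn (L-1) (by omega)
  have e3 : L - 1 - (L-1) = 0 := by omega
  have e4 : L - 1 + 1 = L := by omega
  rw [e3, e4] at hU
  rcases eq_or_ne (x (Sum.inr (⟨L-1, by omega⟩ : Fin L))) 0 with hV0 | hVne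
  · apply hx
    funext s
    rcases s with i | i
    · have h5 := hUn (i:ℕ) i.isLt
      rw [hV0] at h5
      simpa using h5
    · have h5 := hVk (L-1-(i:ℕ)) (i:ℕ) (by omega)
      rw [hV0] at h5
      simpa using h5
  · have hκS : κ * (∑ m ∈ range L, μ^(2*m)) = 1 := by
      have h9 : (κ * (∑ m ∈ range L, μ^(2*m)) - 1)
          * x (Sum.inr (⟨L-1, by omega⟩ : Fin L)) = 0 := by
        linear_combination -hU - N3
      rcases mul_eq_zero.1 h9 with h4 | h4
      · linear_combination h4
      · exact absurd h4 hVne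
    have hτabs : ‖((φ:ℂ) - (φt:ℂ))/lam‖ ≤ 1 - φt := by
      rw [norm_div, ← Complex.ofReal_sub, Complex.norm_real, Real.norm_eq_abs]
      rw [div_le_iff₀ (norm_pos_iff.mpr hlam0)]
      nlinarith [habs1]
    have hκψ : κ + (ψt:ℂ) = ((ψt:ℂ) - ψ)/lam := by rw [hκ]; ring
    have hκabs : ‖κ + (ψt:ℂ)‖ < ψt := by
      rw [hκψ, norm_div, ← Complex.ofReal_sub, Complex.norm_real, Real.norm_eq_abs]
      rw [div_lt_iff₀ (norm_pos_iff.mpr hlam0)]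
      nlinarith [habs2]
    have hlink : ((φ:ℂ) - (φt:ℂ))/lam = 0
        ∨ ∃ β : ℝ, κ + (ψt:ℂ) = (β:ℂ) * (((φ:ℂ) - (φt:ℂ))/lam) := by
      by_cases ha : φ - φt = 0
      · left
        rw [show ((φ:ℂ) - φt) = ((φ - φt : ℝ):ℂ) by push_cast; ring, ha]
        simp
      · right
        refine ⟨(ψt - ψ)/(φ - φt), ?_⟩
        rw [hκψ]
        have hane : ((φ:ℂ) - φt) ≠ 0 := by
          intro h0
          apply ha
          have h6 := congrArg Complex.re h0
          simpa using h6
        field_simp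
        try push_cast
        linear_combination ((ψ:ℂ) - (ψt:ℂ)) * mul_inv_cancel₀ hane
    have hκS2 : κ * (∑ j ∈ range L, ((φt:ℂ) + ((φ:ℂ) - (φt:ℂ))/lam)^(2*j)) = 1 := by
      rw [← hμ]
      exact hκS
    exact keyM L φt ψt hφt0 hφt1 hψt _ κ hτabs hκabs hlink hκS2
end

section
/- Let σ̂ > 0 and γ̂ > 0 be real, set ζ = 1 + σ̂, and let J be a natural number. Suppose y, λ : {0,…,J} → ℝ satisfy, for all j = 1,…,J, the homogeneous implicit-Euler equations ζ y_j = y_{j−1} − γ̂ λ_j and ζ λ_{j−1} = λ_j + γ̂ y_{j−1}. Define sequences φ^{(j)}, ψ^{(j)} by φ^{(0)} = 1, ψ^{(0)} = 0, and ψ^{(j+1)} = ( γ̂ + ζ^{−1}(1+γ̂²) ψ^{(j)} ) / ( ζ + γ̂ ψ^{(j)} ), φ^{(j+1)} = φ^{(j)} ( ζ^{−1} − γ̂ ( ψ^{(j+1)} − γ̂ ζ^{−1} ) ). Then for all j = 0,…,J one has y_j = φ^{(j)} y_0 − ψ^{(j)} λ_j. -/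
theorem implicit_euler_tracking_propagator_coeffs
    (σ γ ζ : ℝ) (hσ : 0 < σ) (hγ : 0 < γ) (hζ : ζ = 1 + σ)
    (J : ℕ) (y lam : ℕ → ℝ)
    (hy : ∀ j, 1 ≤ j → j ≤ J → ζ * y j = y (j - 1) - γ * lam j)
    (hlam : ∀ j, 1 ≤ j → j ≤ J → ζ * lam (j - 1) = lam j + γ * y (j - 1))
    (φ ψ : ℕ → ℝ) (hφ0 : φ 0 = 1) (hψ0 : ψ 0 = 0)
    (hψ : ∀ j, ψ (j + 1) = (γ + ζ⁻¹ * (1 + γ ^ 2) * ψ j) / (ζ + γ * ψ j))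
    (hφ : ∀ j, φ (j + 1) = φ j * (ζ⁻¹ - γ * (ψ (j + 1) - γ * ζ⁻¹))) :
    ∀ j, j ≤ J → y j = φ j * y 0 - ψ j * lam j := by
  have hζpos : 0 < ζ := by rw [hζ]; linarith
  have hinv : ζ * ζ⁻¹ = 1 := mul_inv_cancel₀ hζpos.ne'
  have hψnn : ∀ j, 0 ≤ ψ j := by
    intro j
    induction j with
    | zero => simp [hψ0]
    | succ n ih =>
      rw [hψ n]
      have hu : 0 ≤ ζ⁻¹ := by positivity
      have h1 : 0 ≤ ζ⁻¹ * (1 + γ ^ 2) * ψ n := by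
        apply mul_nonneg _ ih
        apply mul_nonneg hu
        positivity
      apply div_nonneg (by linarith) (by nlinarith)
  intro j
  induction j with
  | zero => intro _; simp [hφ0, hψ0]
  | succ n ih =>
    intro hle
    have ihn := ih (by omega)
    have eq1 := hy (n + 1) (by omega) hle
    have eq2 := hlam (n + 1) (by omega) hle
    simp only [Nat.add_sub_cancel] at eq1 eq2
    have hD : 0 < ζ + γ * ψ n := by nlinarith [hψnn n]
    have hA : (ζ + γ * ψ n) * y n = ζ * φ n * y 0 - ψ n * lam (n + 1) := by
      linear_combination ζ * ihn - ψ n * eq2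
    have hψ1 : (ζ + γ * ψ n) * ψ (n + 1) = γ + ζ⁻¹ * (1 + γ ^ 2) * ψ n := by
      rw [hψ n]; field_simp
    have hmain : ζ * (ζ + γ * ψ n) * y (n + 1)
        = ζ * (ζ + γ * ψ n) * (φ (n + 1) * y 0 - ψ (n + 1) * lam (n + 1)) := by
      rw [hφ n]
      linear_combination (ζ + γ * ψ n) * eq1 + hA + γ * ζ * φ n * y 0 * hψ1
        - ζ * (1 + γ ^ 2) * φ n * y 0 * hinv + ζ * lam (n + 1) * hψ1
        + (1 + γ ^ 2) * ψ n * lam (n + 1) * hinv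
    exact mul_left_cancel₀ (by positivity) hmain
end

section
/- Let ζ > 1 and γ̂ > 0 be real, and define φ^{(0)} = 1, ψ^{(0)} = 0 and, for j ≥ 0, ψ^{(j+1)} = ( γ̂ + ζ^{−1}(1+γ̂²) ψ^{(j)} ) / ( ζ + γ̂ ψ^{(j)} ) and φ^{(j+1)} = φ^{(j)} ( ζ^{−1} − γ̂ ( ψ^{(j+1)} − γ̂ ζ^{−1} ) ). Then for every j ≥ 1 one has 0 < ψ^{(j)} < (1+γ̂²)/(ζγ̂) and 0 < φ^{(j)} < 1. -/
theorem implicit_euler_tracking_coeff_bounds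
    (ζ γ : ℝ) (hζ : 1 < ζ) (hγ : 0 < γ)
    (φ ψ : ℕ → ℝ) (hφ0 : φ 0 = 1) (hψ0 : ψ 0 = 0)
    (hψ : ∀ j, ψ (j + 1) = (γ + ζ⁻¹ * (1 + γ ^ 2) * ψ j) / (ζ + γ * ψ j))
    (hφ : ∀ j, φ (j + 1) = φ j * (ζ⁻¹ - γ * (ψ (j + 1) - γ * ζ⁻¹))) :
    ∀ j, 1 ≤ j →
      0 < ψ j ∧ ψ j < (1 + γ ^ 2) / (ζ * γ) ∧ 0 < φ j ∧ φ j < 1 := by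
  have hζ0 : (0:ℝ) < ζ := by linarith
  have hinv : ζ * ζ⁻¹ = 1 := mul_inv_cancel₀ (ne_of_gt hζ0)
  have hinvpos : 0 < ζ⁻¹ := inv_pos.mpr hζ0
  have key : ∀ j, 0 ≤ ψ j → 0 < ψ (j+1) ∧ ψ (j+1) < (1 + γ ^ 2) / (ζ * γ) ∧
      0 < ζ⁻¹ - γ * (ψ (j + 1) - γ * ζ⁻¹) ∧ ζ⁻¹ - γ * (ψ (j + 1) - γ * ζ⁻¹) < 1 := by
    intro j hj
    have hD : 0 < ζ + γ * ψ j := by nlinarith [mul_nonneg hγ.le hj]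
    have hN : 0 < γ + ζ⁻¹ * (1 + γ ^ 2) * ψ j := by
      have : 0 ≤ ζ⁻¹ * (1 + γ ^ 2) * ψ j := by positivity
      linarith
    have hpos : 0 < ψ (j+1) := by rw [hψ j]; exact div_pos hN hD
    have hmul : ψ (j+1) * (ζ + γ * ψ j) = γ + ζ⁻¹ * (1 + γ ^ 2) * ψ j := by
      rw [hψ j]; field_simp
    have hub : ψ (j+1) < (1 + γ ^ 2) / (ζ * γ) := by
      rw [hψ j, div_lt_div_iff₀ hD (by positivity)]
      have he : ζ⁻¹ * (1 + γ ^ 2) * ψ j * (ζ * γ) = (1 + γ ^ 2) * (γ * ψ j) := by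
        field_simp
      nlinarith [he, hζ0, mul_pos hζ0 hγ]
    constructor
    · exact hpos
    constructor
    · exact hub
    constructor
    · -- factor = ζ⁻¹(1+γ²) - γ ψ' > 0 since ψ' < (1+γ²)/(ζγ)
      have h1 : γ * ψ (j+1) < γ * ((1 + γ ^ 2) / (ζ * γ)) :=
        mul_lt_mul_of_pos_left hub hγ
      have h2 : γ * ((1 + γ ^ 2) / (ζ * γ)) = ζ⁻¹ * (1 + γ ^ 2) := by
        field_simp
      nlinarith [h1, h2]
    · -- factor < 1 ⟺ ζ γ ψ' + ζ > 1 + γ², using hmul and ζ + γψ > 1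
      have hgoal : 1 + γ ^ 2 < ζ * (γ * ψ (j+1)) + ζ := by
        have hstep : (ζ * (γ * ψ (j+1)) + ζ - (1 + γ ^ 2)) * (ζ + γ * ψ j)
            = ζ * (ζ + γ * ψ j - 1) := by
          linear_combination (ζ * γ) * hmul + (γ * (1 + γ ^ 2) * ψ j) * hinv
        nlinarith [hstep, hD, mul_nonneg hγ.le hj]
      nlinarith [hgoal, hinv, mul_pos hγ hpos]
  have aux : ∀ j, 0 ≤ ψ j ∧ 0 < φ j ∧ φ j ≤ 1 := by
    intro j
    induction j with
    | zero => refine ⟨by rw [hψ0], by rw [hφ0]; norm_num, by rw [hφ0]⟩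
    | succ k ih =>
      obtain ⟨hψk, hφk, hφk1⟩ := ih
      obtain ⟨h1, h2, h3, h4⟩ := key k hψk
      refine ⟨h1.le, ?_, ?_⟩
      · rw [hφ k]; exact mul_pos hφk h3
      · rw [hφ k]
        calc φ k * (ζ⁻¹ - γ * (ψ (k + 1) - γ * ζ⁻¹))
            ≤ 1 * (ζ⁻¹ - γ * (ψ (k + 1) - γ * ζ⁻¹)) :=
              mul_le_mul_of_nonneg_right hφk1 h3.le
          _ ≤ 1 := by linarith
  intro j hj
  obtain ⟨k, rfl⟩ : ∃ k, j = k + 1 := ⟨j - 1, by omega⟩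
  obtain ⟨hψk, hφk, hφk1⟩ := aux k
  obtain ⟨h1, h2, h3, h4⟩ := key k hψk
  refine ⟨h1, h2, ?_, ?_⟩
  · rw [hφ k]; exact mul_pos hφk h3
  · rw [hφ k]
    calc φ k * (ζ⁻¹ - γ * (ψ (k + 1) - γ * ζ⁻¹))
        ≤ 1 * (ζ⁻¹ - γ * (ψ (k + 1) - γ * ζ⁻¹)) :=
          mul_le_mul_of_nonneg_right hφk1 h3.le
      _ < 1 := by linarith
end

section
/- Let σ̂ > 0 and γ̂ > 0 be real. Set s = √(σ̂² + γ̂²), a = cosh s, b = sinh(s)/s, d = a + σ̂b, and define φ = 1/d, ψ = γ̂b/d, φ̃ = 1/(1+σ̂), ψ̃ = γ̂/(1+σ̂). Then (φ̃ − φ)² + (ψ̃ − ψ)² ≤ (1 − φ̃)² + ψ̃². (Consequently the tracking ParaOpt bound ρ* is at most 1 when the fine propagator is exact and the coarse propagator is one-step implicit Euler, so ParaOpt does not diverge.) -/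
lemma sinh_le_mul_cosh {x : ℝ} (hx : 0 ≤ x) : Real.sinh x ≤ x * Real.cosh x := by
  have key : ∀ y : ℝ, HasDerivAt (fun t => t * Real.cosh t - Real.sinh t)
      (y * Real.sinh y) y := by
    intro y
    have h := ((hasDerivAt_id y).mul (Real.hasDerivAt_cosh y)).sub (Real.hasDerivAt_sinh y)
    refine h.congr_deriv ?_
    simp [id]
  have mono : MonotoneOn (fun t => t * Real.cosh t - Real.sinh t) (Set.Ici 0) := by
    apply monotoneOn_of_deriv_nonneg (convex_Ici 0)
    · exact ((continuous_id.mul Real.continuous_cosh).sub Real.continuous_sinh).continuousOn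
    · intro y _
      exact (key y).differentiableAt.differentiableWithinAt
    · intro y hy
      rw [interior_Ici, Set.mem_Ioi] at hy
      rw [(key y).deriv]
      exact mul_nonneg hy.le (Real.sinh_nonneg_iff.mpr hy.le)
  have h0 := mono Set.self_mem_Ici hx hx
  simp only [Real.sinh_zero, Real.cosh_zero, zero_mul, sub_zero] at h0
  linarith

theorem paraopt_tracking_exact_ie_no_divergence (σ γ : ℝ) (hσ : 0 < σ) (hγ : 0 < γ) :
    let s := Real.sqrt (σ ^ 2 + γ ^ 2)
    let a := Real.cosh s
    let b := Real.sinh s / s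
    let d := a + σ * b
    let φ := 1 / d
    let ψ := γ * b / d
    let φt := 1 / (1 + σ)
    let ψt := γ / (1 + σ)
    (φt - φ) ^ 2 + (ψt - ψ) ^ 2 ≤ (1 - φt) ^ 2 + ψt ^ 2 := by
  intro s a b d φ ψ φt ψt
  have hS : (0:ℝ) < σ ^ 2 + γ ^ 2 := by positivity
  have hs : 0 < s := Real.sqrt_pos.mpr hS
  have hs2 : s ^ 2 = σ ^ 2 + γ ^ 2 := Real.sq_sqrt hS.le
  have hbdef : b = Real.sinh s / s := rfl
  have hadef : a = Real.cosh s := rfl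
  have hb1 : 1 ≤ b := by
    rw [hbdef, le_div_iff₀ hs]
    simpa using Real.self_le_sinh_iff.mpr hs.le
  have hab : b ≤ a := by
    rw [hbdef, hadef, div_le_iff₀ hs]
    have := sinh_le_mul_cosh hs.le
    linarith
  have hbs : b * s = Real.sinh s := by
    rw [hbdef]; field_simp
  have key : (σ ^ 2 + γ ^ 2) * b ^ 2 = a ^ 2 - 1 := by
    have hc := Real.cosh_sq_sub_sinh_sq s
    have : (σ ^ 2 + γ ^ 2) * b ^ 2 = (b * s) ^ 2 := by rw [← hs2]; ring
    rw [this, hbs, hadef]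
    linarith
  have hb0 : 0 < b := lt_of_lt_of_le one_pos hb1
  have ha1 : 1 ≤ a := le_trans hb1 hab
  have hd : 0 < d := by
    have : 0 < σ * b := mul_pos hσ hb0
    show 0 < a + σ * b
    linarith
  have hσ1 : (0:ℝ) < 1 + σ := by linarith
  -- core inequality
  have core : (d - (1 + σ)) ^ 2 + γ ^ 2 * (a - b) ^ 2 ≤ (σ ^ 2 + γ ^ 2) * d ^ 2 := by
    have hQ : 0 ≤ 2 * (a - 1) * b * (a * (a + 1 - b) + σ * (a * (a + 1) - b * (b - 1))
        + σ ^ 2 * b * (a + 1 - b)) := by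
      have h1 : (0:ℝ) ≤ a - 1 := by linarith
      have h2 : (0:ℝ) ≤ a + 1 - b := by linarith
      have h3 : (0:ℝ) ≤ a * (a + 1) - b * (b - 1) := by nlinarith
      have h4 : (0:ℝ) ≤ a * (a + 1 - b) := by nlinarith
      have h5 : (0:ℝ) ≤ σ ^ 2 * b * (a + 1 - b) := by positivity
      have h6 : (0:ℝ) ≤ σ * (a * (a + 1) - b * (b - 1)) := by positivity
      positivity
    have hid : b ^ 2 * ((σ ^ 2 + γ ^ 2) * d ^ 2
        - ((d - (1 + σ)) ^ 2 + γ ^ 2 * (a - b) ^ 2))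
        = 2 * (a - 1) * b * (a * (a + 1 - b) + σ * (a * (a + 1) - b * (b - 1))
        + σ ^ 2 * b * (a + 1 - b)) := by
      have hddef : d = a + σ * b := rfl
      rw [hddef]
      linear_combination ((a + σ * b) ^ 2 - (a - b) ^ 2) * key
    have hb2 : (0:ℝ) < b ^ 2 := by positivity
    nlinarith [hQ, hid, hb2]
  -- reduce the goal to core
  have hL : (φt - φ) ^ 2 + (ψt - ψ) ^ 2
      = ((d - (1 + σ)) ^ 2 + γ ^ 2 * (a - b) ^ 2) / ((1 + σ) ^ 2 * d ^ 2) := by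
    show (1 / (1 + σ) - 1 / d) ^ 2 + (γ / (1 + σ) - γ * b / d) ^ 2
      = ((d - (1 + σ)) ^ 2 + γ ^ 2 * (a - b) ^ 2) / ((1 + σ) ^ 2 * d ^ 2)
    have hddef : d = a + σ * b := rfl
    rw [hddef]
    field_simp
    ring
  have hR : (1 - φt) ^ 2 + ψt ^ 2 = ((σ ^ 2 + γ ^ 2) * d ^ 2) / ((1 + σ) ^ 2 * d ^ 2) := by
    show (1 - 1 / (1 + σ)) ^ 2 + (γ / (1 + σ)) ^ 2
      = ((σ ^ 2 + γ ^ 2) * d ^ 2) / ((1 + σ) ^ 2 * d ^ 2)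
    field_simp
    ring
  rw [hL, hR]
  exact (div_le_div_iff_of_pos_right (by positivity)).mpr core
end

section
/- Let σ̂ > 0 and γ̂ > 0 be real, and set s = √(σ̂² + γ̂²). Then 1 + γ̂²·sinh(s)/s ≥ cosh(s)·(1 − σ̂²). -/
lemma aux_hasDeriv1 (x : ℝ) :
    HasDerivAt (fun x : ℝ => x * Real.cosh x - Real.sinh x) (x * Real.sinh x) x := by
  have h := ((hasDerivAt_id x).mul (Real.hasDerivAt_cosh x)).sub (Real.hasDerivAt_sinh x)
  exact h.congr_deriv (by simp [id_eq])

lemma aux1 (x : ℝ) (hx : 0 ≤ x) : Real.sinh x ≤ x * Real.cosh x := by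
  have hmono : MonotoneOn (fun x : ℝ => x * Real.cosh x - Real.sinh x) (Set.Ici 0) := by
    apply monotoneOn_of_deriv_nonneg (convex_Ici 0)
    · exact ((continuous_id.mul Real.continuous_cosh).sub Real.continuous_sinh).continuousOn
    · intro y hy
      exact ((aux_hasDeriv1 y).differentiableAt).differentiableWithinAt
    · intro y hy
      rw [(aux_hasDeriv1 y).deriv]
      have : 0 < y := by simpa using hy
      exact mul_nonneg this.le (Real.sinh_nonneg_iff.mpr this.le)
  have := hmono (Set.self_mem_Ici) (Set.mem_Ici.mpr hx) hx
  simpa using this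

lemma aux_hasDeriv2 (x : ℝ) :
    HasDerivAt (fun x : ℝ => 1 + x * Real.sinh x - Real.cosh x) (x * Real.cosh x) x := by
  have h := ((hasDerivAt_const x (1:ℝ)).add ((hasDerivAt_id x).mul (Real.hasDerivAt_sinh x))).sub
    (Real.hasDerivAt_cosh x)
  exact h.congr_deriv (by simp [id_eq])

lemma aux2 (x : ℝ) (hx : 0 ≤ x) : Real.cosh x ≤ 1 + x * Real.sinh x := by
  have hmono : MonotoneOn (fun x : ℝ => 1 + x * Real.sinh x - Real.cosh x) (Set.Ici 0) := by
    apply monotoneOn_of_deriv_nonneg (convex_Ici 0)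
    · exact ((continuous_const.add (continuous_id.mul Real.continuous_sinh)).sub
        Real.continuous_cosh).continuousOn
    · intro y hy
      exact ((aux_hasDeriv2 y).differentiableAt).differentiableWithinAt
    · intro y hy
      rw [(aux_hasDeriv2 y).deriv]
      have : 0 < y := by simpa using hy
      exact mul_nonneg this.le (Real.cosh_pos y).le
  have := hmono (Set.self_mem_Ici) (Set.mem_Ici.mpr hx) hx
  simpa [Real.cosh_zero] using this

theorem paraopt_exact_ie_key_ineq_one (σ γ : ℝ) (hσ : 0 < σ) (hγ : 0 < γ) :
    1 + γ ^ 2 * (Real.sinh (Real.sqrt (σ ^ 2 + γ ^ 2)) / Real.sqrt (σ ^ 2 + γ ^ 2)) ≥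
      Real.cosh (Real.sqrt (σ ^ 2 + γ ^ 2)) * (1 - σ ^ 2) := by
  set s := Real.sqrt (σ ^ 2 + γ ^ 2) with hs
  have hsum : 0 < σ ^ 2 + γ ^ 2 := by positivity
  have hspos : 0 < s := Real.sqrt_pos.mpr hsum
  have hs2 : s ^ 2 = σ ^ 2 + γ ^ 2 := Real.sq_sqrt hsum.le
  have h1 := aux1 s hspos.le
  have h2 := aux2 s hspos.le
  have hsinh : 0 ≤ Real.sinh s := Real.sinh_nonneg_iff.mpr hspos.le
  rw [ge_iff_le, div_eq_mul_inv]
  have hinv : s⁻¹ * s = 1 := inv_mul_cancel₀ hspos.ne'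
  have ht : Real.sinh s * s⁻¹ ≤ Real.cosh s := by
    calc Real.sinh s * s⁻¹ ≤ (s * Real.cosh s) * s⁻¹ := by
          exact mul_le_mul_of_nonneg_right h1 (by positivity)
      _ = Real.cosh s := by field_simp
  have hss : s * Real.sinh s = (σ ^ 2 + γ ^ 2) * (Real.sinh s * s⁻¹) := by
    rw [← hs2]; field_simp
  nlinarith [mul_le_mul_of_nonneg_left ht (sq_nonneg σ)]
end

section
/- Let σ̂ > 0 and γ̂ > 0 be real, and set s = √(σ̂² + γ̂²), a = cosh s, and b = sinh(s)/s. Then (a + σ̂b)(1 + γ̂²b) ≥ (1 + σ̂)(1 + γ̂²b²). -/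
theorem paraopt_exact_ie_key_ineq_two (σ γ : ℝ) (hσ : 0 < σ) (hγ : 0 < γ) :
    (Real.cosh (Real.sqrt (σ ^ 2 + γ ^ 2)) +
        σ * (Real.sinh (Real.sqrt (σ ^ 2 + γ ^ 2)) / Real.sqrt (σ ^ 2 + γ ^ 2))) *
      (1 + γ ^ 2 * (Real.sinh (Real.sqrt (σ ^ 2 + γ ^ 2)) / Real.sqrt (σ ^ 2 + γ ^ 2))) ≥
    (1 + σ) *
      (1 + γ ^ 2 * (Real.sinh (Real.sqrt (σ ^ 2 + γ ^ 2)) / Real.sqrt (σ ^ 2 + γ ^ 2)) ^ 2) := by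
  set s : ℝ := Real.sqrt (σ ^ 2 + γ ^ 2) with hs_def
  have hs : 0 < s := Real.sqrt_pos.mpr (by positivity)
  set b : ℝ := Real.sinh s / s with hb_def
  have ha1 : 1 ≤ Real.cosh s := Real.one_le_cosh s
  have hb1 : 1 ≤ b :=
    (le_div_iff₀ hs).mpr (by simpa using (Real.self_le_sinh_iff.mpr hs.le))
  have hab : b ≤ Real.cosh s := by
    obtain ⟨c, hc, hceq⟩ := exists_hasDerivAt_eq_slope Real.sinh Real.cosh hs
      (Real.continuous_sinh.continuousOn) (fun x _ => Real.hasDerivAt_sinh x)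
    have : b = Real.cosh c := by
      rw [hb_def, hceq]; simp
    rw [this]
    exact Real.cosh_le_cosh.mpr (by
      rw [abs_of_pos hc.1, abs_of_pos hs]; exact hc.2.le)
  nlinarith [mul_nonneg (mul_nonneg (sq_nonneg γ) (by linarith : (0:ℝ) ≤ b))
      (sub_nonneg.mpr hab)]
end
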